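/- arXiv:2506.13714 — 6 statements merged into one kernel-verified Lean document; each statement's English description precedes it below -/
import Mathlib

section
/- Let A ∈ ℝ^{n×m} and B ∈ ℝ^{m×p} with A B = 0, and let d = nullity(B) = m − rank(B). Let A = U Σ V^T be a singular value decomposition of A with U ∈ ℝ^{n×n}, V ∈ ℝ^{m×m} orthogonal and Σ diagonal with singular values in nonincreasing order. Then for any r with r ≤ rank(A) ≤ d, the matrix V_r consisting of the first r columns of V satisfies V_r^T B = 0, and consequently the rank-r truncation A_r = U_r Σ_r V_r^T satisfies A_r B = 0. -/
open Matrix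

/-- The `n × m` "diagonal" matrix with entries `sv 0, sv 1, …` on the main diagonal. -/
def pdiag (n m : ℕ) (sv : ℕ → ℝ) : Matrix (Fin n) (Fin m) ℝ :=
  Matrix.of fun i j => if (i : ℕ) = (j : ℕ) then sv i else 0

/-- The rank-`r` truncation of `pdiag`: only the first `r` diagonal entries are kept. -/
def pdiagTrunc (n m : ℕ) (sv : ℕ → ℝ) (r : ℕ) : Matrix (Fin n) (Fin m) ℝ :=
  Matrix.of fun i j => if (i : ℕ) = (j : ℕ) ∧ (i : ℕ) < r then sv i else 0

/-- Let `A ∈ ℝ^{n×m}`, `B ∈ ℝ^{m×p}` with `A B = 0`, and let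
`A = U Σ Vᵀ` be an SVD (U, V orthogonal, singular values `sv` nonincreasing and
nonnegative).  If `r ≤ rank A ≤ nullity B = m − rank B`, then the first `r` columns
of `V` lie in the (left) null space of `B`, i.e. `V_rᵀ B = 0` (the first `r` rows of
`Vᵀ B` vanish), and consequently the rank-`r` truncation `A_r = U_r Σ_r V_rᵀ = U Σ^{(r)} Vᵀ`
satisfies `A_r B = 0`. -/
theorem truncation_stays_in_left_nullspace (n m p : ℕ)
    (A : Matrix (Fin n) (Fin m) ℝ) (B : Matrix (Fin m) (Fin p) ℝ)
    (hAB : A * B = 0)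
    (U : Matrix (Fin n) (Fin n) ℝ) (V : Matrix (Fin m) (Fin m) ℝ) (sv : ℕ → ℝ)
    (hU : Uᵀ * U = 1) (hV : Vᵀ * V = 1)
    (hsv_mono : ∀ i j : ℕ, i ≤ j → sv j ≤ sv i) (hsv_nonneg : ∀ i, 0 ≤ sv i)
    (hSVD : A = U * pdiag n m sv * Vᵀ)
    (r : ℕ) (hr : r ≤ A.rank) (hd : A.rank ≤ m - B.rank) :
    (∀ i : Fin m, (i : ℕ) < r → ∀ j : Fin p, (Vᵀ * B) i j = 0) ∧
      (U * pdiagTrunc n m sv r * Vᵀ) * B = 0 := by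
  -- Σ (Vᵀ B) = 0
  have hSig : pdiag n m sv * (Vᵀ * B) = 0 := by
    calc pdiag n m sv * (Vᵀ * B)
        = (Uᵀ * U) * (pdiag n m sv * (Vᵀ * B)) := by rw [hU, Matrix.one_mul]
      _ = Uᵀ * (A * B) := by rw [hSVD]; simp only [Matrix.mul_assoc]
      _ = 0 := by rw [hAB, Matrix.mul_zero]
  -- rank bound: if sv i = 0 then rank A ≤ i
  have hrank : ∀ i : ℕ, sv i = 0 → A.rank ≤ i := by
    intro i hi
    set P : Matrix (Fin n) (Fin i) ℝ :=
      Matrix.of (fun a b => if (a : ℕ) = (b : ℕ) then sv a else 0) with hP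
    set Q : Matrix (Fin i) (Fin m) ℝ :=
      Matrix.of (fun a b => if (a : ℕ) = (b : ℕ) then (1 : ℝ) else 0) with hQ
    have hPQ : pdiag n m sv = P * Q := by
      ext a b
      simp only [pdiag, Matrix.mul_apply, hP, hQ, Matrix.of_apply]
      by_cases hab : (a : ℕ) = (b : ℕ)
      · by_cases hai : (a : ℕ) < i
        · rw [Finset.sum_eq_single (⟨(a : ℕ), hai⟩ : Fin i)]
          · simp [hab]
          · intro k _ hk
            have : ¬ ((a : ℕ) = (k : ℕ)) := by
              intro h
              exact hk (by apply Fin.ext; simp [← h])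
            simp [this]
          · simp
        · have hsa : sv (a : ℕ) = 0 := le_antisymm
            (hi ▸ hsv_mono i a (le_of_not_gt hai)) (hsv_nonneg _)
          rw [if_pos hab, hsa]
          refine (Finset.sum_eq_zero ?_).symm
          intro k _
          by_cases h : (a : ℕ) = (k : ℕ)
          · simp [h, hsa]
          · simp [h]
      · rw [if_neg hab]
        refine (Finset.sum_eq_zero ?_).symm
        intro k _
        by_cases h : (a : ℕ) = (k : ℕ)
        · have : ¬ ((k : ℕ) = (b : ℕ)) := fun hh => hab (h.trans hh)
          simp [this]
        · simp [h]
    have hA' : A = (U * P) * (Q * Vᵀ) := by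
      rw [hSVD, hPQ]; simp only [Matrix.mul_assoc]
    calc A.rank ≤ (U * P).rank := by rw [hA']; exact Matrix.rank_mul_le_left _ _
      _ ≤ Fintype.card (Fin i) := Matrix.rank_le_card_width _
      _ = i := Fintype.card_fin i
  -- first r singular values are nonzero
  have hsv_ne : ∀ i : ℕ, i < r → sv i ≠ 0 := by
    intro i hi h0
    exact absurd (lt_of_lt_of_le hi hr) (not_lt.mpr (hrank i h0))
  have hrn : r ≤ n := le_trans hr (le_trans (Matrix.rank_le_card_height A)
    (by simp))
  -- part 1
  have part1 : ∀ i : Fin m, (i : ℕ) < r → ∀ j : Fin p, (Vᵀ * B) i j = 0 := by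
    intro i hi j
    have hin : (i : ℕ) < n := lt_of_lt_of_le hi hrn
    have h0 := congrFun (congrFun hSig ⟨(i : ℕ), hin⟩) j
    have hsum : (pdiag n m sv * (Vᵀ * B)) ⟨(i : ℕ), hin⟩ j
        = sv (i : ℕ) * (Vᵀ * B) i j := by
      simp only [pdiag, Matrix.mul_apply, Matrix.of_apply]
      rw [Finset.sum_eq_single i]
      · simp
      · intro k _ hk
        have : ¬ ((i : ℕ) = (k : ℕ)) := fun h => hk (Fin.ext h.symm)
        simp [this]
      · simp
    rw [hsum] at h0
    have := hsv_ne (i : ℕ) hi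
    simp only [Matrix.zero_apply] at h0
    exact (mul_eq_zero.mp h0).resolve_left this
  refine ⟨part1, ?_⟩
  -- part 2
  have hT : pdiagTrunc n m sv r * (Vᵀ * B) = 0 := by
    ext a j
    rw [Matrix.mul_apply, Matrix.zero_apply]
    refine Finset.sum_eq_zero ?_
    intro k _
    simp only [pdiagTrunc, Matrix.of_apply]
    by_cases h : (a : ℕ) = (k : ℕ) ∧ (a : ℕ) < r
    · rw [if_pos h, part1 k (h.1 ▸ h.2) j, mul_zero]
    · rw [if_neg h, zero_mul]
  calc (U * pdiagTrunc n m sv r * Vᵀ) * B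
      = U * (pdiagTrunc n m sv r * (Vᵀ * B)) := by simp only [Matrix.mul_assoc]
    _ = 0 := by rw [hT, Matrix.mul_zero]
end

section
/- Let X ∈ ℝ^{d0×n} with X X^T invertible and P = (X X^T)^{1/2} its positive definite square root, Y ∈ ℝ^{dL×n}, G ∈ ℝ^{d0×d0}, Z = Y X^T P^{-1}, G̃ = P^{-1} G, and d = d0 − rank(G̃). Let r < d and define Z̄ = Z(I_{d0} − G̃ G̃⁺), where G̃⁺ is the Moore–Penrose pseudoinverse. Assume rank(Z̄) > r, and let Z̄ = Ū Σ̄ V̄^T be a singular value decomposition with singular values in nonincreasing order. Then Ŵ = Ū_r Σ̄_r V̄_r^T P^{-1} is a minimizer of (1/n)‖W X − Y‖_F² over all W ∈ ℝ^{dL×d0} with W G = 0 and rank(W) ≤ r. -/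
open Matrix

/-- Squared Frobenius norm. -/
def frobSq {m n : Type*} [Fintype m] [Fintype n] (M : Matrix m n ℝ) : ℝ :=
  ∑ i, ∑ j, (M i j) ^ 2

lemma frobSq_eq_trace {m n : Type*} [Fintype m] [Fintype n] (M : Matrix m n ℝ) :
    frobSq M = (M * Mᵀ).trace := by
  simp [frobSq, Matrix.trace, Matrix.diag, Matrix.mul_apply, sq]

lemma frobSq_nonneg {m n : Type*} [Fintype m] [Fintype n] (M : Matrix m n ℝ) :
    0 ≤ frobSq M := by
  unfold frobSq; positivity

lemma frobSq_neg {m n : Type*} [Fintype m] [Fintype n] (M : Matrix m n ℝ) :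
    frobSq (-M) = frobSq M := by
  simp [frobSq]

lemma frobSq_eq_zero {m n : Type*} [Fintype m] [Fintype n] {M : Matrix m n ℝ}
    (h : frobSq M = 0) : M = 0 := by
  ext i j
  have h1 : ∀ i ∈ (Finset.univ : Finset m), (0:ℝ) ≤ ∑ j, (M i j)^2 := by
    intro i _; positivity
  have h2 : ∑ j, (M i j)^2 = 0 :=
    (Finset.sum_eq_zero_iff_of_nonneg h1).1 h i (Finset.mem_univ i)
  have h3 : ∀ j ∈ (Finset.univ : Finset n), (0:ℝ) ≤ (M i j)^2 := by
    intro j _; positivity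
  have := (Finset.sum_eq_zero_iff_of_nonneg h3).1 h2 j (Finset.mem_univ j)
  simpa using pow_eq_zero_iff (n := 2) (by norm_num) |>.1 this

lemma frobSq_sub {m n : Type*} [Fintype m] [Fintype n] (A B : Matrix m n ℝ)
    (h : A * Bᵀ = 0) : frobSq (A - B) = frobSq A + frobSq B := by
  have h2 : B * Aᵀ = 0 := by
    have := congrArg Matrix.transpose h
    simpa [Matrix.transpose_mul] using this
  rw [frobSq_eq_trace, frobSq_eq_trace, frobSq_eq_trace]
  have : (A - B) * (A - B)ᵀ = A * Aᵀ + B * Bᵀ := by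
    rw [Matrix.transpose_sub, Matrix.sub_mul, Matrix.mul_sub, Matrix.mul_sub, h, h2]
    abel
  rw [this, Matrix.trace_add]

lemma frobSq_conj {l m : Type*} [Fintype l] [Fintype m] [DecidableEq l] [DecidableEq m]
    (U : Matrix l l ℝ) (V : Matrix m m ℝ) (A : Matrix l m ℝ)
    (hU : Uᵀ * U = 1) (hV : Vᵀ * V = 1) :
    frobSq (U * A * Vᵀ) = frobSq A := by
  rw [frobSq_eq_trace, frobSq_eq_trace]
  have : (U * A * Vᵀ) * (U * A * Vᵀ)ᵀ = U * (A * Aᵀ) * Uᵀ := by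
    simp only [Matrix.transpose_mul, Matrix.transpose_transpose, Matrix.mul_assoc]
    rw [← Matrix.mul_assoc Vᵀ V, hV, Matrix.one_mul]
  rw [this, Matrix.trace_mul_comm, ← Matrix.mul_assoc, hU, Matrix.one_mul]

lemma fin_sum_ite_val {n : ℕ} (c : ℕ) (g : Fin n → ℝ) :
    (∑ j : Fin n, if c = (j:ℕ) then g j else 0) = if h : c < n then g ⟨c, h⟩ else 0 := by
  split_ifs with h
  · rw [Finset.sum_eq_single (⟨c, h⟩ : Fin n)]
    · simp
    · intro b _ hb
      rw [if_neg]
      intro hc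
      exact hb (by apply Fin.ext; simp; omega)
    · simp
  · apply Finset.sum_eq_zero
    intro j _
    rw [if_neg]
    intro hc
    omega

lemma pdiag_mul_apply {dL d0 m : ℕ} (sv : ℕ → ℝ) (A : Matrix (Fin d0) (Fin m) ℝ)
    (i : Fin dL) (j : Fin m) :
    (pdiag dL d0 sv * A) i j = if h : (i:ℕ) < d0 then sv i * A ⟨i, h⟩ j else 0 := by
  rw [Matrix.mul_apply]
  have : ∀ k : Fin d0, pdiag dL d0 sv i k * A k j
      = if (i:ℕ) = (k:ℕ) then sv i * A k j else 0 := by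
    intro k; simp only [pdiag, Matrix.of_apply]; split_ifs <;> simp
  simp only [this]
  have := fin_sum_ite_val (n := d0) (i:ℕ) (fun k => sv i * A k j)
  simpa using this

lemma pdiagTrunc_mul_apply {dL d0 m : ℕ} (sv : ℕ → ℝ) (r : ℕ) (A : Matrix (Fin d0) (Fin m) ℝ)
    (i : Fin dL) (j : Fin m) :
    (pdiagTrunc dL d0 sv r * A) i j = if (i:ℕ) < r then (pdiag dL d0 sv * A) i j else 0 := by
  rw [Matrix.mul_apply, pdiag_mul_apply]
  have : ∀ k : Fin d0, pdiagTrunc dL d0 sv r i k * A k j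
      = if (i:ℕ) = (k:ℕ) then (if (i:ℕ) < r then sv i * A k j else 0) else 0 := by
    intro k; simp only [pdiagTrunc, Matrix.of_apply]
    split_ifs <;> try simp_all
    all_goals (exfalso; omega)
  simp only [this]
  have := fin_sum_ite_val (n := d0) (i:ℕ)
    (fun k => if (i:ℕ) < r then sv i * A k j else 0)
  simp only [this]
  split_ifs <;> simp

lemma pdiagTrunc_mul_eq_zero {dL d0 m : ℕ} (sv : ℕ → ℝ) (r : ℕ)
    (A : Matrix (Fin d0) (Fin m) ℝ) (h : pdiag dL d0 sv * A = 0) :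
    pdiagTrunc dL d0 sv r * A = 0 := by
  ext i j
  rw [pdiagTrunc_mul_apply, h]
  simp

lemma pdiag_transpose (a b : ℕ) (sv : ℕ → ℝ) : (pdiag a b sv)ᵀ = pdiag b a sv := by
  ext i j
  simp only [Matrix.transpose_apply, pdiag, Matrix.of_apply]
  by_cases h : (i:ℕ) = (j:ℕ)
  · rw [if_pos h.symm, if_pos h, h]
  · rw [if_neg (fun hh => h hh.symm), if_neg h]

lemma rank_pdiagTrunc_le (dL d0 r : ℕ) (sv : ℕ → ℝ) :
    (pdiagTrunc dL d0 sv r).rank ≤ r := by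
  have hfac : pdiagTrunc dL d0 sv r =
      (Matrix.of fun (i : Fin dL) (k : Fin r) => if (i:ℕ) = (k:ℕ) then sv i else 0) *
      (Matrix.of fun (k : Fin r) (j : Fin d0) => if (k:ℕ) = (j:ℕ) then (1:ℝ) else 0) := by
    ext i j
    rw [Matrix.mul_apply]
    have : ∀ k : Fin r, (Matrix.of fun (i : Fin dL) (k : Fin r) =>
        if (i:ℕ) = (k:ℕ) then sv i else 0) i k *
        (Matrix.of fun (k : Fin r) (j : Fin d0) => if (k:ℕ) = (j:ℕ) then (1:ℝ) else 0) k j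
        = if (i:ℕ) = (k:ℕ) then (if (i:ℕ) = (j:ℕ) then sv i else 0) else 0 := by
      intro k; simp only [Matrix.of_apply]
      split_ifs <;> try simp_all
      all_goals (exfalso; omega)
    simp only [this]
    rw [fin_sum_ite_val (n := r) (i:ℕ) (fun _ => if (i:ℕ) = (j:ℕ) then sv i else 0)]
    simp only [pdiagTrunc, Matrix.of_apply]
    split_ifs <;> try simp_all
    all_goals (exfalso; omega)
  rw [hfac]
  refine le_trans (Matrix.rank_mul_le_right _ _) ?_
  exact le_trans (Matrix.rank_le_card_height _) (by simp)

lemma sum_range_ite (a m : ℕ) (g : ℕ → ℝ) :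
    ∑ i ∈ Finset.range a, (if i < m then g i else 0) = ∑ i ∈ Finset.range (min a m), g i := by
  rw [← Finset.sum_subset (Finset.range_subset_range.2 (min_le_left a m))
    (fun x hx hx2 => by
      rw [if_neg]
      simp only [Finset.mem_range] at hx hx2
      omega)]
  apply Finset.sum_congr rfl
  intro x hx
  simp only [Finset.mem_range] at hx
  rw [if_pos (by omega)]

lemma sum_key (d0 r : ℕ) (hr : r < d0) (f q : ℕ → ℝ)
    (hf0 : ∀ i, 0 ≤ f i) (hfa : ∀ i j, i ≤ j → f j ≤ f i)
    (hq0 : ∀ i, 0 ≤ q i) (hq1 : ∀ i, q i ≤ 1)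
    (hqs : ∑ i ∈ Finset.range d0, q i ≤ (r:ℝ)) :
    ∑ i ∈ Finset.range d0, (if r ≤ i then f i else 0)
      ≤ ∑ i ∈ Finset.range d0, f i * (1 - q i) := by
  have hsplit : ∀ g : ℕ → ℝ, ∑ i ∈ Finset.range d0, g i
      = (∑ i ∈ Finset.range r, g i) + ∑ i ∈ Finset.Ico r d0, g i := by
    intro g
    rw [Finset.range_eq_Ico, ← Finset.sum_Ico_consecutive _ (Nat.zero_le r) (le_of_lt hr),
      ← Finset.range_eq_Ico]
  have hL : ∑ i ∈ Finset.range d0, (if r ≤ i then f i else 0) = ∑ i ∈ Finset.Ico r d0, f i := by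
    rw [hsplit]
    rw [Finset.sum_eq_zero (fun i hi => by
      simp only [Finset.mem_range] at hi; rw [if_neg (by omega)]), zero_add]
    apply Finset.sum_congr rfl
    intro i hi
    simp only [Finset.mem_Ico] at hi
    rw [if_pos hi.1]
  rw [hL, hsplit (fun i => f i * (1 - q i))]
  have key : ∑ i ∈ Finset.Ico r d0, f i * q i ≤ ∑ i ∈ Finset.range r, f i * (1 - q i) := by
    have h1 : ∑ i ∈ Finset.Ico r d0, f i * q i ≤ ∑ i ∈ Finset.Ico r d0, f r * q i := by
      apply Finset.sum_le_sum
      intro i hi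
      simp only [Finset.mem_Ico] at hi
      exact mul_le_mul_of_nonneg_right (hfa r i hi.1) (hq0 i)
    have h2 : ∑ i ∈ Finset.Ico r d0, f r * q i = f r * ∑ i ∈ Finset.Ico r d0, q i := by
      rw [Finset.mul_sum]
    have h3 : ∑ i ∈ Finset.Ico r d0, q i ≤ ∑ i ∈ Finset.range r, (1 - q i) := by
      have := hsplit q
      have hc : ∑ i ∈ Finset.range r, (1 - q i) = r - ∑ i ∈ Finset.range r, q i := by
        rw [Finset.sum_sub_distrib, Finset.sum_const, Finset.card_range, nsmul_eq_mul, mul_one]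
      rw [hc]
      have : ∑ i ∈ Finset.Ico r d0, q i = (∑ i ∈ Finset.range d0, q i) - ∑ i ∈ Finset.range r, q i := by
        rw [this]; ring
      rw [this]
      linarith
    have h4 : f r * ∑ i ∈ Finset.Ico r d0, q i ≤ f r * ∑ i ∈ Finset.range r, (1 - q i) :=
      mul_le_mul_of_nonneg_left h3 (hf0 r)
    have h5 : f r * ∑ i ∈ Finset.range r, (1 - q i) ≤ ∑ i ∈ Finset.range r, f i * (1 - q i) := by
      rw [Finset.mul_sum]
      apply Finset.sum_le_sum
      intro i hi
      simp only [Finset.mem_range] at hi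
      have : (0:ℝ) ≤ 1 - q i := by linarith [hq1 i]
      exact mul_le_mul_of_nonneg_right (hfa i r (le_of_lt hi)) this
    linarith
  have hexp : ∑ i ∈ Finset.Ico r d0, f i * (1 - q i)
      = (∑ i ∈ Finset.Ico r d0, f i) - ∑ i ∈ Finset.Ico r d0, f i * q i := by
    rw [← Finset.sum_sub_distrib]
    apply Finset.sum_congr rfl
    intro i _; ring
  linarith [hexp, key]

/-- Existence of a symmetric idempotent `Q` with small trace fixing the rows of `N`. -/
lemma exists_proj {p m : ℕ} (r : ℕ) (N : Matrix (Fin p) (Fin m) ℝ) (hN : N.rank ≤ r) :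
    ∃ Q : Matrix (Fin m) (Fin m) ℝ, Qᵀ = Q ∧ Q * Q = Q ∧ Q.trace ≤ (r:ℝ) ∧ N * Q = N ∧
      ∀ i, 0 ≤ Q i i ∧ Q i i ≤ 1 := by
  set H : Matrix (Fin m) (Fin m) ℝ := Nᵀ * N with hHdef
  have hH : H.IsHermitian := by
    have := isHermitian_conjTranspose_mul_self N
    rwa [Matrix.conjTranspose_eq_transpose_of_trivial] at this
  set O : Matrix (Fin m) (Fin m) ℝ := (hH.eigenvectorUnitary : Matrix (Fin m) (Fin m) ℝ)
    with hOdef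
  set μ : Fin m → ℝ := hH.eigenvalues with hμdef
  have hstar : star O = Oᵀ := by
    rw [Matrix.star_eq_conjTranspose, Matrix.conjTranspose_eq_transpose_of_trivial]
  have hO1 : Oᵀ * O = 1 := by
    rw [← hstar]; exact Unitary.coe_star_mul_self hH.eigenvectorUnitary
  have hO2 : O * Oᵀ = 1 := by
    rw [← hstar]; exact Unitary.coe_mul_star_self hH.eigenvectorUnitary
  have hspec : H = O * Matrix.diagonal μ * Oᵀ := by
    have := hH.spectral_theorem
    rw [Unitary.conjStarAlgAut_apply, ← hOdef, hstar] at this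
    simpa using this
  classical
  set g : Fin m → ℝ := fun i => if μ i ≠ 0 then (1:ℝ) else 0 with hgdef
  set Q : Matrix (Fin m) (Fin m) ℝ := O * Matrix.diagonal g * Oᵀ with hQdef
  have hgg : Matrix.diagonal g * Matrix.diagonal g = Matrix.diagonal g := by
    rw [Matrix.diagonal_mul_diagonal]
    refine congrArg _ (funext fun i => ?_)
    rcases eq_or_ne (μ i) 0 with h | h <;> simp [hgdef, h]
  have hQsym : Qᵀ = Q := by
    rw [hQdef]
    simp [Matrix.transpose_mul, Matrix.diagonal_transpose, Matrix.mul_assoc]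
  have hQidem : Q * Q = Q := by
    rw [hQdef]
    simp only [Matrix.mul_assoc]
    rw [← Matrix.mul_assoc Oᵀ O, hO1, Matrix.one_mul,
      ← Matrix.mul_assoc (Matrix.diagonal g) (Matrix.diagonal g), hgg]
  have hdiagD : Matrix.diagonal μ = Oᵀ * H * O := by
    rw [hspec]
    simp only [Matrix.mul_assoc]
    rw [hO1, Matrix.mul_one, ← Matrix.mul_assoc, hO1, Matrix.one_mul]
  have hcard : (Matrix.diagonal μ).rank ≤ r := by
    have h1 : (Matrix.diagonal μ).rank ≤ H.rank := by
      rw [hdiagD]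
      exact le_trans (Matrix.rank_mul_le_left _ _) (Matrix.rank_mul_le_right _ _)
    have h2 : H.rank = N.rank := Matrix.rank_transpose_mul_self N
    omega
  have htr : Q.trace ≤ (r:ℝ) := by
    have h1 : Q.trace = (Matrix.diagonal g).trace := by
      rw [hQdef, Matrix.trace_mul_comm, ← Matrix.mul_assoc, hO1, Matrix.one_mul]
    have h2 : (Matrix.diagonal g).trace = ∑ i, g i := by
      simp [Matrix.trace, Matrix.diag]
    have h3 : ∑ i, g i = ((Finset.univ.filter fun i => μ i ≠ 0).card : ℝ) := by
      rw [hgdef]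
      rw [Finset.sum_ite]
      simp
    have h4 : (Finset.univ.filter fun i => μ i ≠ 0).card = (Matrix.diagonal μ).rank := by
      rw [Matrix.rank_diagonal, Fintype.card_subtype]
    rw [h1, h2, h3, h4]
    exact_mod_cast hcard
  have hDD : Matrix.diagonal μ * Matrix.diagonal g = Matrix.diagonal μ := by
    rw [Matrix.diagonal_mul_diagonal]
    refine congrArg _ (funext fun i => ?_)
    rcases eq_or_ne (μ i) 0 with h | h <;> simp [hgdef, h]
  have hHQ : H * Q = H := by
    rw [hspec, hQdef]
    simp only [Matrix.mul_assoc]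
    rw [← Matrix.mul_assoc Oᵀ O, hO1, Matrix.one_mul,
      ← Matrix.mul_assoc (Matrix.diagonal μ) (Matrix.diagonal g), hDD]
  have hNQ : N * Q = N := by
    have h1mQ : (1 - Q) * (1 - Q) = 1 - Q := by
      rw [sub_mul, one_mul, mul_sub, mul_one, hQidem]
      abel
    have htQ : (1 - Q)ᵀ = 1 - Q := by
      rw [Matrix.transpose_sub, Matrix.transpose_one, hQsym]
    have hfz : frobSq (N - N * Q) = 0 := by
      have hrew : N - N * Q = N * (1 - Q) := by
        rw [Matrix.mul_sub, Matrix.mul_one]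
      rw [hrew, frobSq_eq_trace]
      have : N * (1 - Q) * (N * (1 - Q))ᵀ = N * ((1 - Q) * Nᵀ) := by
        rw [Matrix.transpose_mul, htQ]
        simp only [Matrix.mul_assoc]
        rw [← Matrix.mul_assoc (1 - Q) (1 - Q), h1mQ]
      rw [this, Matrix.trace_mul_comm, Matrix.mul_assoc, ← hHdef,
        Matrix.sub_mul, Matrix.one_mul, Matrix.trace_sub, Matrix.trace_mul_comm Q H, hHQ, sub_self]
    have h0 : N - N * Q = 0 := frobSq_eq_zero hfz
    exact (sub_eq_zero.mp h0).symm
  have hQii : ∀ i, 0 ≤ Q i i ∧ Q i i ≤ 1 := by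
    intro i
    have hs : Q i i = ∑ j, (Q i j)^2 := by
      conv_lhs => rw [← hQidem]
      rw [Matrix.mul_apply]
      refine Finset.sum_congr rfl fun j _ => ?_
      have hji : Q j i = Q i j := by
        calc Q j i = Qᵀ i j := rfl
          _ = Q i j := by rw [hQsym]
      rw [hji]; ring
    constructor
    · rw [hs]; positivity
    · nlinarith [hs, Finset.single_le_sum (f := fun j => (Q i j)^2)
        (fun j _ => sq_nonneg (Q i j)) (Finset.mem_univ i)]
  exact ⟨Q, hQsym, hQidem, htr, hNQ, hQii⟩

open Finset in
lemma frobSq_pdiag (a b : ℕ) (w : ℕ → ℝ) :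
    frobSq (pdiag a b w) = ∑ i ∈ Finset.range a, (if i < b then (w i)^2 else 0) := by
  unfold frobSq
  have hinner : ∀ i : Fin a, ∑ j : Fin b, (pdiag a b w i j)^2
      = if (i:ℕ) < b then (w i)^2 else 0 := by
    intro i
    have : ∀ j : Fin b, (pdiag a b w i j)^2 = if (i:ℕ) = (j:ℕ) then (w i)^2 else 0 := by
      intro j; simp only [pdiag, Matrix.of_apply]; split_ifs <;> simp
    simp only [this]
    rw [fin_sum_ite_val (n := b) (i:ℕ) (fun _ => (w i)^2)]
    split_ifs with h <;> simp [h]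
  simp only [hinner]
  exact Fin.sum_univ_eq_sum_range (fun k => if k < b then (w k)^2 else 0) a

lemma key_lb (dL d0 r : ℕ) (hr : r < d0) (sv : ℕ → ℝ)
    (hmono : ∀ i j : ℕ, i ≤ j → sv j ≤ sv i) (hnn : ∀ i, 0 ≤ sv i)
    (N : Matrix (Fin dL) (Fin d0) ℝ) (hN : N.rank ≤ r) :
    frobSq (pdiagTrunc dL d0 sv r - pdiag dL d0 sv) ≤ frobSq (N - pdiag dL d0 sv) := by
  classical
  set S : Matrix (Fin dL) (Fin d0) ℝ := pdiag dL d0 sv with hSdef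
  set f : ℕ → ℝ := fun k => if k < dL then (sv k)^2 else 0 with hfdef
  have hf0 : ∀ k, 0 ≤ f k := by
    intro k; rw [hfdef]; dsimp only; split_ifs <;> positivity
  have hfa : ∀ i j : ℕ, i ≤ j → f j ≤ f i := by
    intro i j hij; rw [hfdef]; dsimp only
    split_ifs with h1 h2 h2
    · exact pow_le_pow_left₀ (hnn j) (hmono i j hij) 2
    · omega
    · positivity
    · exact le_refl 0
  -- LHS value
  have hLHS : frobSq (pdiagTrunc dL d0 sv r - S)
      = ∑ i ∈ Finset.range d0, (if r ≤ i then f i else 0) := by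
    set sv' : ℕ → ℝ := fun k => if k < r then 0 else sv k with hsv'
    have hneg : pdiagTrunc dL d0 sv r - S = -(pdiag dL d0 sv') := by
      ext i j
      simp only [Matrix.sub_apply, Matrix.neg_apply, pdiag, pdiagTrunc, Matrix.of_apply,
        hsv', hSdef]
      by_cases h1 : (i:ℕ) = (j:ℕ)
      all_goals by_cases h2 : (i:ℕ) < r
      all_goals (try rw [h1] at h2)
      all_goals simp [h1, h2]
    rw [hneg, frobSq_neg, frobSq_pdiag]
    have e1 : ∑ i ∈ Finset.range dL, (if i < d0 then (sv' i)^2 else 0)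
        = ∑ i ∈ Finset.range (min dL d0), (sv' i)^2 := sum_range_ite dL d0 (fun i => (sv' i)^2)
    have e2 : ∑ i ∈ Finset.range d0, (if r ≤ i then f i else 0)
        = ∑ i ∈ Finset.range (min dL d0), (sv' i)^2 := by
      have : ∀ i, (if r ≤ i then f i else 0) = (if i < dL then (if r ≤ i then (sv i)^2 else 0) else 0) := by
        intro i; rw [hfdef]; dsimp only; split_ifs <;> first | rfl | (exfalso; omega)
      rw [Finset.sum_congr rfl (fun i _ => this i),
        sum_range_ite d0 dL (fun i => if r ≤ i then (sv i)^2 else 0), Nat.min_comm]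
      refine Finset.sum_congr rfl fun i _ => ?_
      rw [hsv']; dsimp only
      split_ifs <;> first | (exfalso; omega) | simp
    rw [e1, e2]
  -- projection
  obtain ⟨Q, hQsym, hQidem, htrQ, hNQ, hQii⟩ := exists_proj r N hN
  set q : ℕ → ℝ := fun k => if h : k < d0 then Q ⟨k, h⟩ ⟨k, h⟩ else 0 with hqdef
  have hq0 : ∀ k, 0 ≤ q k := by
    intro k; rw [hqdef]; dsimp only
    split_ifs with h
    · exact (hQii ⟨k, h⟩).1
    · exact le_refl 0
  have hq1 : ∀ k, q k ≤ 1 := by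
    intro k; rw [hqdef]; dsimp only
    split_ifs with h
    · exact (hQii ⟨k, h⟩).2
    · exact zero_le_one
  have htrq : ∑ k ∈ Finset.range d0, q k ≤ (r:ℝ) := by
    have : ∑ k ∈ Finset.range d0, q k = Q.trace := by
      rw [← Fin.sum_univ_eq_sum_range q d0, Matrix.trace]
      refine Finset.sum_congr rfl fun i _ => ?_
      rw [Matrix.diag_apply, hqdef]; dsimp only
      rw [dif_pos i.isLt]
    rw [this]; exact htrQ
  -- Pythagoras: drop the Q-component
  have horth : ((N - S) * (1 - Q)) * (-( (N - S) * Q))ᵀ = 0 := by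
    have h1 : (1 - Q) * Qᵀ = 0 := by
      rw [hQsym, Matrix.sub_mul, Matrix.one_mul, hQidem, sub_self]
    rw [Matrix.transpose_neg, Matrix.mul_neg, Matrix.transpose_mul]
    simp only [Matrix.mul_assoc]
    rw [← Matrix.mul_assoc (1 - Q) Qᵀ, h1, Matrix.zero_mul, Matrix.mul_zero, neg_zero]
  have hsplitNS : (N - S) * (1 - Q) - (-( (N - S) * Q)) = N - S := by
    rw [sub_neg_eq_add, ← Matrix.mul_add, sub_add_cancel, Matrix.mul_one]
  have hpyth : frobSq (N - S) = frobSq ((N - S) * (1 - Q)) + frobSq (-( (N - S) * Q)) := by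
    have h := frobSq_sub _ _ horth
    rw [hsplitNS] at h
    exact h
  have hge1 : frobSq ((N - S) * (1 - Q)) ≤ frobSq (N - S) := by
    rw [hpyth]
    have := frobSq_nonneg (-( (N - S) * Q))
    linarith
  -- identify the residual
  have hres : (N - S) * (1 - Q) = -(S * (1 - Q)) := by
    rw [Matrix.sub_mul]
    have : N * (1 - Q) = 0 := by rw [Matrix.mul_sub, Matrix.mul_one, hNQ, sub_self]
    rw [this, zero_sub]
  -- compute frobSq (S * (1 - Q))
  have h1mQ : (1 - Q) * (1 - Q) = 1 - Q := by
    rw [Matrix.sub_mul, Matrix.one_mul, Matrix.mul_sub, Matrix.mul_one, hQidem]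
    abel
  have htQ : (1 - Q)ᵀ = 1 - Q := by
    rw [Matrix.transpose_sub, Matrix.transpose_one, hQsym]
  have hStS : Sᵀ * S = Matrix.diagonal (fun i : Fin d0 => f (i:ℕ)) := by
    rw [hSdef, pdiag_transpose]
    ext i j
    rw [pdiag_mul_apply, Matrix.diagonal_apply]
    rw [hfdef]; dsimp only
    by_cases h : (i:ℕ) < dL
    · rw [dif_pos h]
      simp only [pdiag, Matrix.of_apply]
      by_cases hij : i = j
      · subst hij
        rw [if_pos rfl, if_pos rfl]
        simp [hfdef, h, pow_two]
      · rw [if_neg (fun hc => hij (Fin.ext hc)), if_neg hij, mul_zero]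
    · rw [dif_neg h]
      by_cases hij : i = j
      · subst hij
        rw [if_pos rfl]
        simp [hfdef, h]
      · rw [if_neg hij]
  have hcomp : frobSq (S * (1 - Q))
      = (∑ i ∈ Finset.range d0, f i) - ∑ i ∈ Finset.range d0, f i * q i := by
    rw [frobSq_eq_trace]
    have : S * (1 - Q) * (S * (1 - Q))ᵀ = S * Sᵀ - S * (Q * Sᵀ) := by
      rw [Matrix.transpose_mul, htQ]
      simp only [Matrix.mul_assoc]
      rw [← Matrix.mul_assoc (1 - Q) (1 - Q), h1mQ, Matrix.sub_mul, Matrix.one_mul,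
        Matrix.mul_sub]
    rw [this, Matrix.trace_sub]
    have hT1 : (S * Sᵀ).trace = ∑ i ∈ Finset.range d0, f i := by
      rw [← frobSq_eq_trace, hSdef, frobSq_pdiag]
      rw [sum_range_ite dL d0 (fun i => (sv i)^2)]
      have : ∀ i, f i = if i < dL then (sv i)^2 else 0 := fun i => rfl
      rw [Finset.sum_congr rfl (fun i _ => this i), sum_range_ite d0 dL (fun i => (sv i)^2),
        Nat.min_comm]
    have hT2 : (S * (Q * Sᵀ)).trace = ∑ i ∈ Finset.range d0, f i * q i := by
      rw [Matrix.trace_mul_comm, Matrix.mul_assoc Q Sᵀ S, hStS]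
      rw [← Fin.sum_univ_eq_sum_range (fun k => f k * q k) d0, Matrix.trace]
      refine Finset.sum_congr rfl fun i _ => ?_
      have hdiag : Matrix.diag (Q * Matrix.diagonal (fun i : Fin d0 => f (i:ℕ))) i
          = Q i i * f (i:ℕ) := by
        rw [Matrix.diag_apply, Matrix.mul_diagonal]
      rw [hdiag]
      have hqi : q (i:ℕ) = Q i i := by
        rw [hqdef]; dsimp only
        rw [dif_pos i.isLt]
      rw [hqi]; ring
    rw [hT1, hT2]
  -- final chain
  have hfinal : ∑ i ∈ Finset.range d0, (if r ≤ i then f i else 0)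
      ≤ frobSq (S * (1 - Q)) := by
    rw [hcomp]
    have hsk := sum_key d0 r hr f q hf0 hfa hq0 hq1 htrq
    have hexp : ∑ i ∈ Finset.range d0, f i * (1 - q i)
        = (∑ i ∈ Finset.range d0, f i) - ∑ i ∈ Finset.range d0, f i * q i := by
      rw [← Finset.sum_sub_distrib]; exact Finset.sum_congr rfl fun i _ => by ring
    linarith
  have hres2 : frobSq ((N - S) * (1 - Q)) = frobSq (S * (1 - Q)) := by
    rw [hres, frobSq_neg]
  rw [hLHS]
  linarith [hge1, hfinal, hres2]

lemma mul_left_cancel_orth {l m : Type*} [Fintype l] [Fintype m] [DecidableEq l]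
    (U : Matrix l l ℝ) (hU : Uᵀ * U = 1) (M : Matrix l m ℝ) (h : U * M = 0) : M = 0 := by
  have h2 : Uᵀ * (U * M) = 0 := by rw [h, Matrix.mul_zero]
  rwa [← Matrix.mul_assoc, hU, Matrix.one_mul] at h2


/-- **Theorem `global_optima_inv`.** With `P = (X Xᵀ)^{1/2}` positive
definite, `Z = Y Xᵀ P⁻¹`, `G̃ = P⁻¹ G`, `Gp` the Moore–Penrose pseudoinverse of `G̃`,
`r < d = d0 − rank G̃`, `Z̄ = Z (I − G̃ Gp)` of rank `> r`, and `Z̄ = Ū Σ̄ V̄ᵀ` an SVD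
(singular values nonincreasing), the matrix `Ŵ = Ū_r Σ̄_r V̄_rᵀ P⁻¹` is a minimizer of
`(1/n)‖W X − Y‖_F²` over all `W` with `W G = 0` and `rank W ≤ r`. -/
theorem global_optima_constrained (d0 dL n : ℕ)
    (X : Matrix (Fin d0) (Fin n) ℝ) (Y : Matrix (Fin dL) (Fin n) ℝ)
    (G : Matrix (Fin d0) (Fin d0) ℝ)
    (P : Matrix (Fin d0) (Fin d0) ℝ) (hP : P.PosDef) (hPsq : P * P = X * Xᵀ)
    (Gp : Matrix (Fin d0) (Fin d0) ℝ)
    (hGp1 : (P⁻¹ * G) * Gp * (P⁻¹ * G) = P⁻¹ * G)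
    (hGp2 : Gp * (P⁻¹ * G) * Gp = Gp)
    (hGp3 : ((P⁻¹ * G) * Gp)ᵀ = (P⁻¹ * G) * Gp)
    (hGp4 : (Gp * (P⁻¹ * G))ᵀ = Gp * (P⁻¹ * G))
    (r : ℕ) (hrd : r < d0 - (P⁻¹ * G).rank)
    (U : Matrix (Fin dL) (Fin dL) ℝ) (V : Matrix (Fin d0) (Fin d0) ℝ) (sv : ℕ → ℝ)
    (hU : Uᵀ * U = 1) (hV : Vᵀ * V = 1)
    (hsv_mono : ∀ i j : ℕ, i ≤ j → sv j ≤ sv i) (hsv_nonneg : ∀ i, 0 ≤ sv i)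
    (hSVD : Y * Xᵀ * P⁻¹ * (1 - (P⁻¹ * G) * Gp) = U * pdiag dL d0 sv * Vᵀ)
    (hrank : r < (Y * Xᵀ * P⁻¹ * (1 - (P⁻¹ * G) * Gp)).rank) :
    (U * pdiagTrunc dL d0 sv r * Vᵀ * P⁻¹) * G = 0 ∧
    (U * pdiagTrunc dL d0 sv r * Vᵀ * P⁻¹).rank ≤ r ∧
    ∀ W : Matrix (Fin dL) (Fin d0) ℝ, W * G = 0 → W.rank ≤ r →
      (1 / (n : ℝ)) * frobSq ((U * pdiagTrunc dL d0 sv r * Vᵀ * P⁻¹) * X - Y)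
        ≤ (1 / (n : ℝ)) * frobSq (W * X - Y) := by
  classical
  have hr : r < d0 := by omega
  have hPdet : IsUnit P.det := hP.det_pos.ne'.isUnit
  have hPt : Pᵀ = P := by
    have := hP.isHermitian.eq
    rwa [Matrix.conjTranspose_eq_transpose_of_trivial] at this
  have hPP : P * P⁻¹ = 1 := Matrix.mul_nonsing_inv P hPdet
  have hPP' : P⁻¹ * P = 1 := Matrix.nonsing_inv_mul P hPdet
  have hPit : (P⁻¹)ᵀ = P⁻¹ := by rw [Matrix.transpose_nonsing_inv, hPt]
  have hU' : U * Uᵀ = 1 := mul_eq_one_comm.mp hU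
  have hV' : V * Vᵀ = 1 := mul_eq_one_comm.mp hV
  have hPiPi : ((P⁻¹ * G) * Gp) * ((P⁻¹ * G) * Gp) = (P⁻¹ * G) * Gp := by
    rw [← Matrix.mul_assoc ((P⁻¹ * G) * Gp) (P⁻¹ * G) Gp, hGp1]
  have hZbGt : (Y * Xᵀ * P⁻¹ * (1 - (P⁻¹ * G) * Gp)) * (P⁻¹ * G) = 0 := by
    rw [Matrix.mul_assoc]
    have h0 : (1 - (P⁻¹ * G) * Gp) * (P⁻¹ * G) = 0 := by
      rw [Matrix.sub_mul, Matrix.one_mul, hGp1, sub_self]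
    rw [h0, Matrix.mul_zero]
  have hZbPi : (Y * Xᵀ * P⁻¹ * (1 - (P⁻¹ * G) * Gp)) * ((P⁻¹ * G) * Gp) = 0 := by
    rw [Matrix.mul_assoc]
    have h0 : (1 - (P⁻¹ * G) * Gp) * ((P⁻¹ * G) * Gp) = 0 := by
      rw [Matrix.sub_mul, Matrix.one_mul, hPiPi, sub_self]
    rw [h0, Matrix.mul_zero]
  set Z : Matrix (Fin dL) (Fin d0) ℝ := Y * Xᵀ * P⁻¹ with hZdef
  set Pi : Matrix (Fin d0) (Fin d0) ℝ := (P⁻¹ * G) * Gp with hPidef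
  set S : Matrix (Fin dL) (Fin d0) ℝ := pdiag dL d0 sv with hSdef
  set Sr : Matrix (Fin dL) (Fin d0) ℝ := pdiagTrunc dL d0 sv r with hSrdef
  set Zb : Matrix (Fin dL) (Fin d0) ℝ := Z * (1 - Pi) with hZbdef
  have hSVD' : Zb = U * S * Vᵀ := hSVD
  have hSVG : S * (Vᵀ * (P⁻¹ * G)) = 0 := by
    apply mul_left_cancel_orth U hU
    have h1 : U * (S * (Vᵀ * (P⁻¹ * G))) = Zb * (P⁻¹ * G) := by
      rw [hSVD']
      simp only [Matrix.mul_assoc]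
    rw [h1, hZbGt]
  have hSVPi : S * (Vᵀ * Pi) = 0 := by
    apply mul_left_cancel_orth U hU
    have h1 : U * (S * (Vᵀ * Pi)) = Zb * Pi := by
      rw [hSVD']
      simp only [Matrix.mul_assoc]
    rw [h1, hZbPi]
  have hSrVG : Sr * (Vᵀ * (P⁻¹ * G)) = 0 := pdiagTrunc_mul_eq_zero _ _ _ hSVG
  have hSrVPi : Sr * (Vᵀ * Pi) = 0 := pdiagTrunc_mul_eq_zero _ _ _ hSVPi
  -- Part 1
  have part1 : (U * Sr * Vᵀ * P⁻¹) * G = 0 := by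
    have h1 : (U * Sr * Vᵀ * P⁻¹) * G = U * (Sr * (Vᵀ * (P⁻¹ * G))) := by
      simp only [Matrix.mul_assoc]
    rw [h1, hSrVG, Matrix.mul_zero]
  -- Part 2
  have part2 : (U * Sr * Vᵀ * P⁻¹).rank ≤ r := by
    have h1 : U * Sr * Vᵀ * P⁻¹ = U * (Sr * (Vᵀ * P⁻¹)) := by
      simp only [Matrix.mul_assoc]
    rw [h1]
    refine le_trans (Matrix.rank_mul_le_right _ _) ?_
    refine le_trans (Matrix.rank_mul_le_left _ _) ?_
    rw [hSrdef]
    exact rank_pdiagTrunc_le dL d0 r sv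
  refine ⟨part1, part2, ?_⟩
  -- trace expansion helper
  have expand : ∀ {β : Type} [Fintype β] (A B : Matrix (Fin dL) β ℝ),
      ((A - B) * (A - B)ᵀ).trace
        = (A * Aᵀ).trace - (A * Bᵀ).trace - (B * Aᵀ).trace + (B * Bᵀ).trace := by
    intro β _ A B
    rw [Matrix.transpose_sub, Matrix.sub_mul, Matrix.mul_sub, Matrix.mul_sub,
      Matrix.trace_sub, Matrix.trace_sub, Matrix.trace_sub]
    ring
  -- Step A: change of variables W X ↦ W P
  have stepA : ∀ W : Matrix (Fin dL) (Fin d0) ℝ,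
      frobSq (W * X - Y) = frobSq (W * P - Z)
        + ((Y * Yᵀ).trace - (Z * Zᵀ).trace) := by
    intro W
    rw [frobSq_eq_trace, frobSq_eq_trace, expand, expand]
    have hCC : (W * P) * (W * P)ᵀ = (W * X) * (W * X)ᵀ := by
      rw [Matrix.transpose_mul, Matrix.transpose_mul, hPt]
      calc W * P * (P * Wᵀ) = W * (P * P) * Wᵀ := by simp only [Matrix.mul_assoc]
        _ = W * (X * Xᵀ) * Wᵀ := by rw [hPsq]
        _ = W * X * (Xᵀ * Wᵀ) := by simp only [Matrix.mul_assoc]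
    have hCD : (W * P) * Zᵀ = (W * X) * Yᵀ := by
      have hZt : Zᵀ = P⁻¹ * (Xᵀᵀ * Yᵀ) := by
        rw [hZdef, Matrix.transpose_mul, Matrix.transpose_mul, hPit]
      rw [hZt, Matrix.transpose_transpose]
      calc W * P * (P⁻¹ * (X * Yᵀ)) = W * ((P * P⁻¹) * (X * Yᵀ)) := by
            simp only [Matrix.mul_assoc]
        _ = W * X * Yᵀ := by rw [hPP, Matrix.one_mul, Matrix.mul_assoc]
    have hDC : Z * (W * P)ᵀ = Y * (W * X)ᵀ := by
      rw [Matrix.transpose_mul, Matrix.transpose_mul, hPt, hZdef]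
      calc Y * Xᵀ * P⁻¹ * (P * Wᵀ) = Y * (Xᵀ * ((P⁻¹ * P) * Wᵀ)) := by
            simp only [Matrix.mul_assoc]
        _ = Y * (Xᵀ * Wᵀ) := by rw [hPP', Matrix.one_mul]
    rw [hCC, hCD, hDC]
    ring
  -- Step B: splitting off the Π-component
  have stepB : ∀ M : Matrix (Fin dL) (Fin d0) ℝ, M * Pi = 0 →
      frobSq (M - Z) = frobSq (M - Zb) + frobSq (Z * Pi) := by
    intro M hM
    have horth : (M - Zb) * (Z * Pi)ᵀ = 0 := by
      rw [Matrix.transpose_mul, hGp3]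
      have h1 : (M - Zb) * Pi = 0 := by
        rw [Matrix.sub_mul, hM, hZbdef, Matrix.mul_assoc]
        have : (1 - Pi) * Pi = 0 := by
          rw [Matrix.sub_mul, Matrix.one_mul, hPiPi, sub_self]
        rw [this, Matrix.mul_zero, sub_self]
      rw [← Matrix.mul_assoc, h1, Matrix.zero_mul]
    have hsum : (M - Zb) - (Z * Pi) = M - Z := by
      rw [hZbdef, Matrix.mul_sub, Matrix.mul_one, sub_sub]
      congr 1
      abel
    have := frobSq_sub (M - Zb) (Z * Pi) horth
    rw [hsum] at this
    exact this
  -- candidate matrix times P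
  have hWhatP : (U * Sr * Vᵀ * P⁻¹) * P = U * Sr * Vᵀ := by
    calc (U * Sr * Vᵀ * P⁻¹) * P = U * (Sr * (Vᵀ * (P⁻¹ * P))) := by
          simp only [Matrix.mul_assoc]
      _ = U * Sr * Vᵀ := by rw [hPP', Matrix.mul_one]; simp only [Matrix.mul_assoc]
  have hWhatPi : (U * Sr * Vᵀ) * Pi = 0 := by
    have h1 : (U * Sr * Vᵀ) * Pi = U * (Sr * (Vᵀ * Pi)) := by
      simp only [Matrix.mul_assoc]
    rw [h1, hSrVPi, Matrix.mul_zero]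
  have hWhatdiff : U * Sr * Vᵀ - Zb = U * (Sr - S) * Vᵀ := by
    rw [hSVD', Matrix.mul_sub, Matrix.sub_mul]
  have hWhatfrob : frobSq (U * Sr * Vᵀ - Zb) = frobSq (Sr - S) := by
    rw [hWhatdiff, frobSq_conj U V (Sr - S) hU hV]
  -- the main inequality for each admissible W
  intro W hWG hWr
  have hone : (0:ℝ) ≤ 1 / (n:ℝ) := by positivity
  refine mul_le_mul_of_nonneg_left ?_ hone
  -- W side
  have hWPi : (W * P) * Pi = 0 := by
    calc (W * P) * Pi = (W * (P * P⁻¹)) * (G * Gp) := by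
          rw [hPidef]; simp only [Matrix.mul_assoc]
      _ = (W * G) * Gp := by rw [hPP, Matrix.mul_one, Matrix.mul_assoc]
      _ = 0 := by rw [hWG, Matrix.zero_mul]
  have hWPrank : (W * P).rank ≤ r := le_trans (Matrix.rank_mul_le_left _ _) hWr
  have hWlb : frobSq (Sr - S) ≤ frobSq (W * P - Zb) := by
    set N : Matrix (Fin dL) (Fin d0) ℝ := Uᵀ * (W * P) * V with hNdef
    have hNrank : N.rank ≤ r := by
      rw [hNdef]
      refine le_trans (Matrix.rank_mul_le_left _ _) ?_
      exact le_trans (Matrix.rank_mul_le_right _ _) hWPrank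
    have hident : W * P - Zb = U * (N - S) * Vᵀ := by
      have hUNV : U * N * Vᵀ = W * P := by
        rw [hNdef]
        calc U * (Uᵀ * (W * P) * V) * Vᵀ = (U * Uᵀ) * ((W * P) * (V * Vᵀ)) := by
              simp only [Matrix.mul_assoc]
          _ = W * P := by rw [hU', hV', Matrix.one_mul, Matrix.mul_one]
      rw [Matrix.mul_sub, Matrix.sub_mul, hUNV, ← hSVD']
    rw [hident, frobSq_conj U V (N - S) hU hV]
    rw [hSdef, hSrdef]
    exact key_lb dL d0 r hr sv hsv_mono hsv_nonneg N hNrank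
  -- assemble
  have eW := stepA W
  have eWhat := stepA (U * Sr * Vᵀ * P⁻¹)
  rw [hWhatP] at eWhat
  have bW := stepB (W * P) hWPi
  have bWhat := stepB (U * Sr * Vᵀ) hWhatPi
  rw [hWhatfrob] at bWhat
  rw [eW, eWhat, bW, bWhat]
  linarith [hWlb]
end

section
/- Let G̃ ∈ ℝ^{d0×n'} and for λ ≥ 0 let B(λ) be the positive definite square root of I_{d0} + n λ G̃ G̃^T (n > 0 fixed). Then lim_{λ→∞} B(λ)^{-1} = I_{d0} − G̃ G̃⁺, where G̃⁺ is the Moore–Penrose pseudoinverse of G̃. -/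
open Matrix Filter

/-- Let `G̃ ∈ ℝ^{d0×n'}` and, for `λ ≥ 0`, let `B(λ)` be the positive
definite square root of `I + n λ G̃ G̃ᵀ` (with `n > 0` fixed).  Then
`B(λ)⁻¹ → I − G̃ G̃⁺` as `λ → ∞`, where `G̃⁺` is the Moore–Penrose pseudoinverse of
`G̃` (characterized by the four Penrose conditions). -/
theorem inverse_sqrt_tendsto_projection (d0 n' : ℕ)
    (Gt : Matrix (Fin d0) (Fin n') ℝ)
    (nn : ℝ) (hn : 0 < nn)
    (B : ℝ → Matrix (Fin d0) (Fin d0) ℝ)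
    (hB : ∀ lam : ℝ, 0 ≤ lam →
      (B lam).PosDef ∧ B lam * B lam = 1 + (nn * lam) • (Gt * Gtᵀ))
    (Gp : Matrix (Fin n') (Fin d0) ℝ)
    (hGp1 : Gt * Gp * Gt = Gt) (hGp2 : Gp * Gt * Gp = Gp)
    (hGp3 : (Gt * Gp)ᵀ = Gt * Gp) (hGp4 : (Gp * Gt)ᵀ = Gp * Gt) :
    Tendsto (fun lam => (B lam)⁻¹) atTop (nhds (1 - Gt * Gp)) := by
  set M : Matrix (Fin d0) (Fin d0) ℝ := Gt * Gtᵀ with hM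
  set P : Matrix (Fin d0) (Fin d0) ℝ := Gt * Gp with hP
  set W : Matrix (Fin d0) (Fin d0) ℝ := Gpᵀ * Gp with hW
  have hMsym : Mᵀ = M := by rw [hM, transpose_mul, transpose_transpose]
  have hPsym : Pᵀ = P := hGp3
  have hWsym : Wᵀ = W := by rw [hW, transpose_mul, transpose_transpose]
  have hPM : P * M = M := by rw [hM, ← Matrix.mul_assoc, hGp1]
  have hMP : M * P = M := by
    have h := congrArg Matrix.transpose hPM
    rwa [transpose_mul, hPsym, hMsym] at h
  have hMW : M * W = P := by
    have h1 : Gtᵀ * Gpᵀ = Gp * Gt := by rw [← transpose_mul, hGp4]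
    have h2 : Gtᵀ * (Gpᵀ * Gp) = Gp := by rw [← Matrix.mul_assoc, h1, hGp2]
    rw [hM, hW, Matrix.mul_assoc, h2, hP]
  have hWM : W * M = P := by
    have h := congrArg Matrix.transpose hMW
    rwa [transpose_mul, hWsym, hMsym, hPsym] at h
  have hMQ : M * (1 - P) = 0 := by rw [mul_sub, mul_one, hMP, sub_self]
  -- decomposition of the inverse
  have hdecomp : ∀ lam : ℝ, 0 ≤ lam →
      (B lam)⁻¹ = (1 - P) + (B lam)⁻¹ * P := by
    intro lam hlam
    obtain ⟨hpd, hsq⟩ := hB lam hlam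
    have hdet : IsUnit (B lam).det := isUnit_iff_ne_zero.mpr hpd.det_pos.ne'
    have hpd1 : (B lam + 1).PosDef := hpd.add_posSemidef Matrix.PosSemidef.one
    have hdet1 : IsUnit (B lam + 1).det := isUnit_iff_ne_zero.mpr hpd1.det_pos.ne'
    have hfac : (B lam + 1) * ((B lam - 1) * (1 - P)) = 0 := by
      rw [← mul_assoc]
      have h2 : (B lam + 1) * (B lam - 1) = B lam * B lam - 1 := by noncomm_ring
      rw [h2, hsq, add_sub_cancel_left, smul_mul_assoc, hMQ, smul_zero]
    have hsub : (B lam - 1) * (1 - P) = 0 := by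
      have h3 := congrArg (fun Y => (B lam + 1)⁻¹ * Y) hfac
      simpa [← mul_assoc, nonsing_inv_mul _ hdet1] using h3
    have hBQ : B lam * (1 - P) = (1 - P) := by
      rw [sub_mul, one_mul, sub_eq_zero] at hsub
      exact hsub
    have hQinv : (B lam)⁻¹ * (1 - P) = 1 - P := by
      conv_lhs => rw [← hBQ, ← mul_assoc, nonsing_inv_mul _ hdet, one_mul]
    calc (B lam)⁻¹ = (B lam)⁻¹ * ((1 - P) + P) := by rw [sub_add_cancel, mul_one]
      _ = (1 - P) + (B lam)⁻¹ * P := by rw [mul_add, hQinv]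
  -- the quantitative bound
  have hbound : ∀ lam : ℝ, 0 < lam → ∀ i j : Fin d0,
      (((B lam)⁻¹ * P) i j) ^ 2 ≤ ((W * M * W) j j) / (nn * lam) := by
    intro lam hlam i j
    obtain ⟨hpd, hsq⟩ := hB lam hlam.le
    set t : ℝ := nn * lam with ht
    have htpos : 0 < t := mul_pos hn hlam
    set Bl : Matrix (Fin d0) (Fin d0) ℝ := B lam with hBl
    have hdet : IsUnit Bl.det := isUnit_iff_ne_zero.mpr hpd.det_pos.ne'
    have hinvmul : Bl⁻¹ * Bl = 1 := nonsing_inv_mul _ hdet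
    have hmulinv : Bl * Bl⁻¹ = 1 := mul_nonsing_inv _ hdet
    have hBsym : Blᵀ = Bl := by
      have h := hpd.isHermitian
      rwa [Matrix.IsHermitian, conjTranspose_eq_transpose_of_trivial] at h
    have hBinvsym : (Bl⁻¹)ᵀ = Bl⁻¹ := by rw [transpose_nonsing_inv, hBsym]
    -- Bl commutes with M
    have hcomm : Bl * M = M * Bl := by
      have h1 : Bl * (Bl * Bl) = (Bl * Bl) * Bl := by rw [mul_assoc]
      rw [hsq] at h1
      have h2 : t • (Bl * M) = t • (M * Bl) := by
        rw [mul_add, add_mul, mul_one, one_mul, mul_smul_comm, smul_mul_assoc] at h1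
        exact add_left_cancel h1
      exact smul_right_injective _ htpos.ne' h2
    have hcommInv : M * Bl⁻¹ = Bl⁻¹ * M := by
      calc M * Bl⁻¹ = Bl⁻¹ * (Bl * M) * Bl⁻¹ := by
            rw [← mul_assoc, hinvmul, one_mul]
        _ = Bl⁻¹ * (M * Bl) * Bl⁻¹ := by rw [hcomm]
        _ = Bl⁻¹ * M := by rw [mul_assoc, mul_assoc, hmulinv, mul_one]
    set C : Matrix (Fin d0) (Fin d0) ℝ := Bl⁻¹ * Bl⁻¹ with hC
    have hC1 : (1 + t • M) * C = 1 := by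
      rw [← hsq, hC, mul_assoc, ← mul_assoc Bl Bl⁻¹, hmulinv, one_mul, hmulinv]
    have hC2 : C * (1 + t • M) = 1 := by
      rw [← hsq, hC, mul_assoc, ← mul_assoc Bl⁻¹ Bl, hinvmul, one_mul, hinvmul]
    have hMC : t • (M * C) = 1 - C := by
      rw [add_mul, one_mul, smul_mul_assoc] at hC1
      linear_combination (norm := module) hC1
    have hCM : t • (C * M) = 1 - C := by
      rw [mul_add, mul_one, mul_smul_comm] at hC2
      linear_combination (norm := module) hC2
    -- key identity
    have hMCM : (t * t) • (M * C * M) = t • M - 1 + C := by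
      have h4 : t • (M * C * M) = M - C * M := by
        calc t • (M * C * M) = (t • (M * C)) * M := by rw [smul_mul_assoc]
          _ = (1 - C) * M := by rw [hMC]
          _ = M - C * M := by rw [sub_mul, one_mul]
      calc (t * t) • (M * C * M) = t • (t • (M * C * M)) := by rw [smul_smul]
        _ = t • (M - C * M) := by rw [h4]
        _ = t • M - t • (C * M) := by rw [smul_sub]
        _ = t • M - (1 - C) := by rw [hCM]
        _ = t • M - 1 + C := by abel
    -- X = Bl⁻¹ * P
    set X : Matrix (Fin d0) (Fin d0) ℝ := Bl⁻¹ * P with hX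
    have hXX : Xᵀ * X = W * (M * C * M) * W := by
      calc Xᵀ * X = Pᵀ * (Bl⁻¹)ᵀ * (Bl⁻¹ * P) := by rw [hX, transpose_mul]
        _ = P * (C * P) := by rw [hPsym, hBinvsym, hC]; noncomm_ring
        _ = (W * M) * (C * (M * W)) := by rw [hWM, hMW]
        _ = W * (M * C * M) * W := by noncomm_ring
    -- entry bound step 1
    have step1 : (X i j) ^ 2 ≤ (Xᵀ * X) j j := by
      have h5 : (Xᵀ * X) j j = ∑ k, (X k j) ^ 2 := by
        rw [Matrix.mul_apply]
        congr 1; funext k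
        rw [transpose_apply, sq]
      rw [h5]
      exact Finset.single_le_sum (f := fun k => (X k j) ^ 2)
        (fun k _ => sq_nonneg _) (Finset.mem_univ i)
    -- step 4: (W * (1 - C) * W) j j ≥ 0
    set Y : Matrix (Fin n') (Fin d0) ℝ := Gtᵀ * (Bl⁻¹ * W) with hY
    have hYY : W * (1 - C) * W = t • (Yᵀ * Y) := by
      have h6 : 1 - C = t • (Bl⁻¹ * M * Bl⁻¹) := by
        rw [← hMC, hC]
        congr 1
        rw [← mul_assoc, hcommInv]
      rw [h6, mul_smul_comm, smul_mul_assoc]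
      congr 1
      rw [hY, hM]
      simp only [transpose_mul, transpose_transpose, hBinvsym, hWsym, Matrix.mul_assoc]
    have step4 : 0 ≤ (W * (1 - C) * W) j j := by
      rw [hYY]
      have h7 : (Yᵀ * Y) j j = ∑ k, (Y k j) ^ 2 := by
        rw [Matrix.mul_apply]
        congr 1; funext k
        rw [transpose_apply, sq]
      rw [Matrix.smul_apply, h7, smul_eq_mul]
      positivity
    -- combine
    have hXXentry : (t * t) * ((Xᵀ * X) j j) ≤ t * ((W * M * W) j j) := by
      have h8 : (t * t) • (Xᵀ * X) = t • (W * M * W) - W * (1 - C) * W := by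
        calc (t * t) • (Xᵀ * X) = W * ((t * t) • (M * C * M)) * W := by
              rw [hXX, mul_smul_comm, smul_mul_assoc]
          _ = W * (t • M - 1 + C) * W := by rw [hMCM]
          _ = t • (W * M * W) - W * (1 - C) * W := by
              simp only [mul_sub, sub_mul, mul_add, add_mul, mul_one, one_mul,
                mul_smul_comm, smul_mul_assoc]
              abel
      have h9 := congrFun (congrFun h8 j) j
      simp only [Matrix.smul_apply, Matrix.sub_apply, smul_eq_mul] at h9
      linarith
    have hXXle : (Xᵀ * X) j j ≤ ((W * M * W) j j) / t := by
      rw [le_div_iff₀ htpos]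
      have h10 : t * ((Xᵀ * X) j j * t) ≤ t * ((W * M * W) j j) := by
        calc t * ((Xᵀ * X) j j * t) = (t * t) * ((Xᵀ * X) j j) := by ring
          _ ≤ t * ((W * M * W) j j) := hXXentry
      exact le_of_mul_le_mul_left h10 htpos
    exact le_trans step1 hXXle
  -- now the limit, entrywise
  refine tendsto_pi_nhds.mpr ?_
  intro i
  rw [tendsto_pi_nhds]
  intro j
  have hzero : Tendsto (fun lam => ((B lam)⁻¹ * P) i j) atTop (nhds 0) := by
    refine squeeze_zero_norm' (a := fun lam => Real.sqrt ((W * M * W) j j / (nn * lam))) ?_ ?_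
    · filter_upwards [eventually_gt_atTop 0] with lam hlam
      have h := hbound lam hlam i j
      rw [Real.norm_eq_abs, ← Real.sqrt_sq_eq_abs]
      exact Real.sqrt_le_sqrt h
    · have h1 : Tendsto (fun lam : ℝ => (W * M * W) j j / (nn * lam)) atTop (nhds 0) := by
        apply Tendsto.div_atTop tendsto_const_nhds
        exact Tendsto.const_mul_atTop hn tendsto_id
      have h2 : Tendsto Real.sqrt (nhds 0) (nhds 0) := by
        have h3 := Real.continuous_sqrt.continuousAt (x := (0:ℝ))
        simpa [ContinuousAt, Real.sqrt_zero] using h3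
      exact h2.comp h1
  have hfinal : Tendsto (fun lam => ((1 - P) : Matrix (Fin d0) (Fin d0) ℝ) i j
      + ((B lam)⁻¹ * P) i j) atTop (nhds ((1 - P) i j + 0)) :=
    tendsto_const_nhds.add hzero
  rw [add_zero] at hfinal
  apply hfinal.congr'
  filter_upwards [eventually_ge_atTop (0 : ℝ)] with lam hlam
  conv_rhs => rw [hdecomp lam hlam]
  rw [Matrix.add_apply]
end

section
/- Let A = [[A_{11}, A_{21}†],[A_{21}, A_{22}]] ∈ ℂ^{(n+m)×(n+m)} be Hermitian positive definite with A_{11} ∈ ℂ^{n×n} and A_{22} ∈ ℂ^{m×m} Hermitian positive definite, and let B ∈ GL(n, ℂ). Define E = A · [[B, 0],[0, 0]] = [[A_{11} B, 0],[A_{21} B, 0]]. Then the Moore–Penrose pseudoinverse of E is E⁺ = [[E_{11}, E_{12}],[0, 0]], where E_{11} = B^{-1} (A_{11}² + A_{21}† A_{21})^{-1} A_{11} and E_{12} = B^{-1} (A_{11}² + A_{21}† A_{21})^{-1} A_{21}†. -/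
open Matrix
open scoped ComplexOrder

/-- The block matrix `E = A·[[B,0],[0,0]] = [[A₁₁B, 0],[A₂₁B, 0]]`. -/
noncomputable def Emat {n m : ℕ} (A11 : Matrix (Fin n) (Fin n) ℂ) (A21 : Matrix (Fin m) (Fin n) ℂ)
    (B : Matrix (Fin n) (Fin n) ℂ) : Matrix (Fin n ⊕ Fin m) (Fin n ⊕ Fin m) ℂ :=
  Matrix.fromBlocks (A11 * B) (0 : Matrix (Fin n) (Fin m) ℂ)
    (A21 * B) (0 : Matrix (Fin m) (Fin m) ℂ)

/-- The claimed pseudoinverse `E⁺ = [[E₁₁, E₁₂],[0,0]]` with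
`E₁₁ = B⁻¹(A₁₁² + A₂₁ᴴA₂₁)⁻¹A₁₁` and `E₁₂ = B⁻¹(A₁₁² + A₂₁ᴴA₂₁)⁻¹A₂₁ᴴ`. -/
noncomputable def EmatPinv {n m : ℕ} (A11 : Matrix (Fin n) (Fin n) ℂ)
    (A21 : Matrix (Fin m) (Fin n) ℂ) (B : Matrix (Fin n) (Fin n) ℂ) :
    Matrix (Fin n ⊕ Fin m) (Fin n ⊕ Fin m) ℂ :=
  Matrix.fromBlocks (B⁻¹ * (A11 * A11 + A21ᴴ * A21)⁻¹ * A11)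
    (B⁻¹ * (A11 * A11 + A21ᴴ * A21)⁻¹ * A21ᴴ)
    (0 : Matrix (Fin m) (Fin n) ℂ) (0 : Matrix (Fin m) (Fin m) ℂ)

/-- **Lemma `pseudoinverse_product`.** Let
`A = [[A₁₁, A₂₁ᴴ],[A₂₁, A₂₂]] ∈ ℂ^{(n+m)×(n+m)}` be Hermitian positive definite with
`A₁₁`, `A₂₂` Hermitian positive definite, and let `B ∈ GL(n, ℂ)`.  Then
`EmatPinv A11 A21 B` is the Moore–Penrose pseudoinverse of `Emat A11 A21 B`, i.e. it
satisfies the four Penrose conditions (which characterize `E⁺` uniquely). -/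
theorem block_pseudoinverse (n m : ℕ)
    (A11 : Matrix (Fin n) (Fin n) ℂ) (A21 : Matrix (Fin m) (Fin n) ℂ)
    (A22 : Matrix (Fin m) (Fin m) ℂ)
    (hA : (Matrix.fromBlocks A11 A21ᴴ A21 A22).PosDef)
    (hA11 : A11.PosDef) (hA22 : A22.PosDef)
    (B : Matrix (Fin n) (Fin n) ℂ) (hB : IsUnit B.det) :
    Emat A11 A21 B * EmatPinv A11 A21 B * Emat A11 A21 B = Emat A11 A21 B ∧
    EmatPinv A11 A21 B * Emat A11 A21 B * EmatPinv A11 A21 B = EmatPinv A11 A21 B ∧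
    (Emat A11 A21 B * EmatPinv A11 A21 B)ᴴ = Emat A11 A21 B * EmatPinv A11 A21 B ∧
    (EmatPinv A11 A21 B * Emat A11 A21 B)ᴴ = EmatPinv A11 A21 B * Emat A11 A21 B := by
    classical
  have hsq : (A11 * A11).PosDef := by
    refine Matrix.PosDef.of_dotProduct_mulVec_pos ?_ (fun x hx => ?_)
    · nth_rewrite 1 [← hA11.isHermitian.eq]
      exact isHermitian_conjTranspose_mul_self A11
    · have hinj := Matrix.mulVec_injective_iff_isUnit.mpr hA11.isUnit
      have hx' : A11 *ᵥ x ≠ 0 := (hinj.ne_iff' (by simp)).2 hx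
      nth_rewrite 1 [← hA11.isHermitian.eq]
      rw [← mulVec_mulVec, dotProduct_mulVec, vecMul_conjTranspose, star_star]
      exact dotProduct_star_self_pos_iff.mpr hx'
  have hS : (A11 * A11 + A21ᴴ * A21).PosDef :=
    hsq.add_posSemidef (posSemidef_conjTranspose_mul_self A21)
  have hSdet : IsUnit (A11 * A11 + A21ᴴ * A21).det :=
    (Matrix.isUnit_iff_isUnit_det _).1 hS.isUnit
  have hSS : (A11 * A11 + A21ᴴ * A21)⁻¹ * (A11 * A11 + A21ᴴ * A21) = 1 :=
    nonsing_inv_mul _ hSdet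
  have hBB : B⁻¹ * B = 1 := nonsing_inv_mul B hB
  have hBB' : B * B⁻¹ = 1 := mul_nonsing_inv B hB
  have hSH : ((A11 * A11 + A21ᴴ * A21)⁻¹)ᴴ = (A11 * A11 + A21ᴴ * A21)⁻¹ :=
    (hS.inv).isHermitian.eq
  have hcan : ∀ (k : ℕ) (Y : Matrix (Fin n) (Fin k) ℂ), B * (B⁻¹ * Y) = Y := by
    intro k Y; rw [← Matrix.mul_assoc, hBB', Matrix.one_mul]
  have htl : B⁻¹ * (A11 * A11 + A21ᴴ * A21)⁻¹ * A11 * (A11 * B)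
      + B⁻¹ * (A11 * A11 + A21ᴴ * A21)⁻¹ * A21ᴴ * (A21 * B) = 1 := by
    calc B⁻¹ * (A11 * A11 + A21ᴴ * A21)⁻¹ * A11 * (A11 * B)
          + B⁻¹ * (A11 * A11 + A21ᴴ * A21)⁻¹ * A21ᴴ * (A21 * B)
        = B⁻¹ * ((A11 * A11 + A21ᴴ * A21)⁻¹ * (A11 * A11 + A21ᴴ * A21) * B) := by
          simp only [Matrix.mul_add, Matrix.add_mul, Matrix.mul_assoc]
      _ = 1 := by rw [hSS, Matrix.one_mul, hBB]
  have h1 : EmatPinv A11 A21 B * Emat A11 A21 B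
      = Matrix.fromBlocks (1 : Matrix (Fin n) (Fin n) ℂ) 0 0 0 := by
    rw [EmatPinv, Emat, fromBlocks_multiply, htl]
    simp only [Matrix.mul_zero, Matrix.zero_mul, add_zero, zero_add]
  have hc1 : ∀ (k : ℕ) (X : Matrix (Fin k) (Fin n) ℂ) (Y : Matrix (Fin n) (Fin n) ℂ),
      X * B * (B⁻¹ * (A11 * A11 + A21ᴴ * A21)⁻¹ * Y)
      = X * (A11 * A11 + A21ᴴ * A21)⁻¹ * Y := by
    intro k X Y
    simp only [Matrix.mul_assoc, hcan]
  have hc2 : ∀ (k : ℕ) (X : Matrix (Fin k) (Fin n) ℂ) (Y : Matrix (Fin n) (Fin m) ℂ),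
      X * B * (B⁻¹ * (A11 * A11 + A21ᴴ * A21)⁻¹ * Y)
      = X * (A11 * A11 + A21ᴴ * A21)⁻¹ * Y := by
    intro k X Y
    simp only [Matrix.mul_assoc, hcan]
  have h2 : Emat A11 A21 B * EmatPinv A11 A21 B
      = Matrix.fromBlocks (A11 * (A11 * A11 + A21ᴴ * A21)⁻¹ * A11)
          (A11 * (A11 * A11 + A21ᴴ * A21)⁻¹ * A21ᴴ)
          (A21 * (A11 * A11 + A21ᴴ * A21)⁻¹ * A11)
          (A21 * (A11 * A11 + A21ᴴ * A21)⁻¹ * A21ᴴ) := by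
    simp only [Emat, EmatPinv, fromBlocks_multiply, Matrix.zero_mul, add_zero]
    rw [hc1, hc2, hc1, hc2]
  have hEE : Emat A11 A21 B * (Matrix.fromBlocks (1 : Matrix (Fin n) (Fin n) ℂ) 0 0 0)
      = Emat A11 A21 B := by
    rw [Emat, fromBlocks_multiply]
    simp only [Matrix.mul_one, Matrix.mul_zero, Matrix.zero_mul, add_zero, zero_add]
  have hPE : (Matrix.fromBlocks (1 : Matrix (Fin n) (Fin n) ℂ) 0 0 0) * EmatPinv A11 A21 B
      = EmatPinv A11 A21 B := by
    rw [EmatPinv, fromBlocks_multiply]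
    simp only [Matrix.one_mul, Matrix.mul_zero, Matrix.zero_mul, add_zero, zero_add]
  refine ⟨?_, ?_, ?_, ?_⟩
  · rw [mul_assoc, h1, hEE]
  · rw [mul_assoc, ← mul_assoc, h1, hPE]
  · rw [h2, fromBlocks_conjTranspose]
    have e1 : (A11 * (A11 * A11 + A21ᴴ * A21)⁻¹ * A11)ᴴ
        = A11 * (A11 * A11 + A21ᴴ * A21)⁻¹ * A11 := by
      rw [conjTranspose_mul, conjTranspose_mul, hSH, hA11.isHermitian.eq, Matrix.mul_assoc]
    have e2 : (A21 * (A11 * A11 + A21ᴴ * A21)⁻¹ * A11)ᴴ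
        = A11 * (A11 * A11 + A21ᴴ * A21)⁻¹ * A21ᴴ := by
      rw [conjTranspose_mul, conjTranspose_mul, hSH, hA11.isHermitian.eq, Matrix.mul_assoc]
    have e3 : (A11 * (A11 * A11 + A21ᴴ * A21)⁻¹ * A21ᴴ)ᴴ
        = A21 * (A11 * A11 + A21ᴴ * A21)⁻¹ * A11 := by
      rw [conjTranspose_mul, conjTranspose_mul, hSH, hA11.isHermitian.eq,
        conjTranspose_conjTranspose, Matrix.mul_assoc]
    have e4 : (A21 * (A11 * A11 + A21ᴴ * A21)⁻¹ * A21ᴴ)ᴴ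
        = A21 * (A11 * A11 + A21ᴴ * A21)⁻¹ * A21ᴴ := by
      rw [conjTranspose_mul, conjTranspose_mul, hSH, conjTranspose_conjTranspose,
        Matrix.mul_assoc]
    rw [e1, e2, e3, e4]
  · rw [h1, fromBlocks_conjTranspose]
    simp
end

section
/- Let G be a finite group with orthogonal representation ρ on ℝ^{d0} (ρ(g)^T ρ(g) = I for all g), X ∈ ℝ^{d0×n} with X X^T positive definite, P = (X X^T)^{1/2}, G = I_{d0} − ρ(g₀) for a generator g₀ of the cyclic group G, Ḡ = (1/|G|) Σ_{g∈G} ρ(g), and assume Σ_{g∈G} ρ(g) X X^T ρ(g)^T is positive definite. Then |G| · Ḡ (Σ_{g∈G} ρ(g) X X^T ρ(g)^T)^{-1} = P^{-1} ( I_{d0} − (P^{-1} G)(P^{-1} G)⁺ ) P^{-1}, where (·)⁺ denotes the Moore–Penrose pseudoinverse. -/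
open Matrix

/-- **key identity in the proof of Theorem `global_optima_da_inv`.**
Let `G` be a finite cyclic group with generator `g₀` and orthogonal representation `ρ`
on `ℝ^{d0}`, `X ∈ ℝ^{d0×n}` with `X Xᵀ` positive definite, `P = (X Xᵀ)^{1/2}`,
`Gmat = I − ρ(g₀)`, `Ḡ = (1/|G|) Σ_g ρ(g)`, and assume `Σ_g ρ(g) X Xᵀ ρ(g)ᵀ` is
positive definite.  Then
`|G| Ḡ (Σ_g ρ(g) X Xᵀ ρ(g)ᵀ)⁻¹ = P⁻¹ (I − (P⁻¹ Gmat)(P⁻¹ Gmat)⁺) P⁻¹`,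
where `(P⁻¹ Gmat)⁺` is the Moore–Penrose pseudoinverse (characterized by the four
Penrose conditions). -/
theorem augmented_inverse_equals_projected_inverse {G : Type*} [Group G] [Fintype G]
    (d0 n : ℕ) (g₀ : G) (hgen : ∀ h : G, h ∈ Subgroup.zpowers g₀)
    (ρ : G →* Matrix (Fin d0) (Fin d0) ℝ)
    (horth : ∀ g : G, (ρ g)ᵀ * ρ g = 1)
    (X : Matrix (Fin d0) (Fin n) ℝ) (hXX : (X * Xᵀ).PosDef)
    (P : Matrix (Fin d0) (Fin d0) ℝ) (hP : P.PosDef) (hPsq : P * P = X * Xᵀ)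
    (hSpos : (∑ g : G, ρ g * (X * Xᵀ) * (ρ g)ᵀ).PosDef)
    (Gp : Matrix (Fin d0) (Fin d0) ℝ)
    (hGp1 : (P⁻¹ * (1 - ρ g₀)) * Gp * (P⁻¹ * (1 - ρ g₀)) = P⁻¹ * (1 - ρ g₀))
    (hGp2 : Gp * (P⁻¹ * (1 - ρ g₀)) * Gp = Gp)
    (hGp3 : ((P⁻¹ * (1 - ρ g₀)) * Gp)ᵀ = (P⁻¹ * (1 - ρ g₀)) * Gp)
    (hGp4 : (Gp * (P⁻¹ * (1 - ρ g₀)))ᵀ = Gp * (P⁻¹ * (1 - ρ g₀))) :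
    (Fintype.card G : ℝ) •
        (((Fintype.card G : ℝ)⁻¹ • ∑ g : G, ρ g) *
          (∑ g : G, ρ g * (X * Xᵀ) * (ρ g)ᵀ)⁻¹)
      = P⁻¹ * (1 - (P⁻¹ * (1 - ρ g₀)) * Gp) * P⁻¹ := by
  classical
  set A : Matrix (Fin d0) (Fin d0) ℝ := ∑ g : G, ρ g with hA
  set S : Matrix (Fin d0) (Fin d0) ℝ := ∑ g : G, ρ g * (X * Xᵀ) * (ρ g)ᵀ with hS
  set Q : Matrix (Fin d0) (Fin d0) ℝ := P⁻¹ * (1 - ρ g₀) with hQ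
  set Pi : Matrix (Fin d0) (Fin d0) ℝ := 1 - Q * Gp with hPi
  have hPdet : IsUnit P.det := isUnit_iff_ne_zero.mpr hP.det_pos.ne'
  have hPinv : P⁻¹ * P = 1 := Matrix.nonsing_inv_mul P hPdet
  have hPinv' : P * P⁻¹ = 1 := Matrix.mul_nonsing_inv P hPdet
  have hSdet : IsUnit S.det := isUnit_iff_ne_zero.mpr hSpos.det_pos.ne'
  have hSinv' : S * S⁻¹ = 1 := Matrix.mul_nonsing_inv S hSdet
  have hPT : Pᵀ = P := hP.isHermitian.eq
  have hρT : ∀ g : G, (ρ g)ᵀ = ρ g⁻¹ := by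
    intro g
    have h1 : ρ g * ρ g⁻¹ = 1 := by rw [← _root_.map_mul, mul_inv_cancel, _root_.map_one]
    calc (ρ g)ᵀ = (ρ g)ᵀ * (ρ g * ρ g⁻¹) := by rw [h1, mul_one]
      _ = ((ρ g)ᵀ * ρ g) * ρ g⁻¹ := by rw [mul_assoc]
      _ = ρ g⁻¹ := by rw [horth g, one_mul]
  have hAρ : ∀ g : G, A * ρ g = A := by
    intro g
    rw [hA, Finset.sum_mul]
    exact Fintype.sum_equiv (Equiv.mulRight g) _ _ (fun h => by simp [_root_.map_mul])
  have hAT : Aᵀ = A := by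
    rw [hA, Matrix.transpose_sum]
    exact Fintype.sum_equiv (Equiv.inv G) _ _ (fun h => by simp [hρT])
  -- Π · Q = 0
  have hPiQ : Pi * Q = 0 := by
    rw [hPi, sub_mul, one_mul, hGp1, sub_self]
  have hg0 : Pi * P⁻¹ * ρ g₀ = Pi * P⁻¹ := by
    have h2 : Pi * P⁻¹ * (1 - ρ g₀) = 0 := by rw [mul_assoc, ← hQ, hPiQ]
    have h3 : Pi * P⁻¹ - Pi * P⁻¹ * ρ g₀ = 0 := by
      rw [← h2, mul_sub, mul_one]
    linear_combination (norm := noncomm_ring) -h3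
  have hginv : Pi * P⁻¹ * ρ g₀⁻¹ = Pi * P⁻¹ := by
    conv_lhs => rw [← hg0]
    rw [mul_assoc, ← _root_.map_mul, mul_inv_cancel, _root_.map_one, mul_one]
  have key : ∀ g : G, Pi * P⁻¹ * ρ g = Pi * P⁻¹ := by
    have hpow : ∀ k : ℤ, Pi * P⁻¹ * ρ (g₀ ^ k) = Pi * P⁻¹ := by
      intro k
      induction k using Int.induction_on with
      | zero => simp
      | succ m ih => rw [_root_.zpow_add_one, _root_.map_mul, ← mul_assoc, ih, hg0]
      | pred m ih => rw [_root_.zpow_sub_one, _root_.map_mul, ← mul_assoc, ih, hginv]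
    intro g
    obtain ⟨k, hk⟩ := Subgroup.mem_zpowers_iff.mp (hgen g)
    rw [← hk]; exact hpow k
  -- Π P⁻¹ S = Π (P A)
  have hPiS : Pi * P⁻¹ * S = Pi * (P * A) := by
    rw [hS, Finset.mul_sum]
    have hterm : ∀ g : G, Pi * P⁻¹ * (ρ g * (X * Xᵀ) * (ρ g)ᵀ) = Pi * P * (ρ g)ᵀ := by
      intro g
      calc Pi * P⁻¹ * (ρ g * (X * Xᵀ) * (ρ g)ᵀ)
          = (Pi * P⁻¹ * ρ g) * (P * P) * (ρ g)ᵀ := by rw [hPsq]; noncomm_ring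
        _ = (Pi * P⁻¹) * (P * P) * (ρ g)ᵀ := by rw [key g]
        _ = Pi * P * (ρ g)ᵀ := by rw [mul_assoc Pi P⁻¹, ← mul_assoc P⁻¹, hPinv, one_mul]
    calc (∑ g : G, Pi * P⁻¹ * (ρ g * (X * Xᵀ) * (ρ g)ᵀ))
        = ∑ g : G, Pi * P * (ρ g)ᵀ := by exact Finset.sum_congr rfl (fun g _ => hterm g)
      _ = Pi * P * ∑ g : G, (ρ g)ᵀ := by rw [Finset.mul_sum]
      _ = Pi * P * Aᵀ := by rw [hA, Matrix.transpose_sum]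
      _ = Pi * (P * A) := by rw [hAT, mul_assoc]
  -- (Q Gp)(P A) = 0
  have hQGpPA : (Q * Gp) * (P * A) = 0 := by
    have hPQ : P * Q = 1 - ρ g₀ := by rw [hQ, ← mul_assoc, hPinv', one_mul]
    have h0 : A * (P * (Q * Gp)) = 0 := by
      rw [← mul_assoc P Q Gp, hPQ, ← mul_assoc, mul_sub, mul_one, hAρ g₀, sub_self,
        zero_mul]
    have h1 := congrArg Matrix.transpose h0
    rw [Matrix.transpose_mul, Matrix.transpose_mul, hGp3, hPT, hAT,
      Matrix.transpose_zero] at h1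
    calc (Q * Gp) * (P * A) = (Q * Gp) * P * A := by rw [← mul_assoc]
      _ = 0 := h1
  have hPiPA : Pi * (P * A) = P * A := by
    rw [hPi, sub_mul, one_mul, hQGpPA, sub_zero]
  -- conclude A S⁻¹ = P⁻¹ Π P⁻¹
  have hASinv : A * S⁻¹ = P⁻¹ * Pi * P⁻¹ := by
    have h1 : P⁻¹ * Pi * P⁻¹ * S = A := by
      rw [mul_assoc (P⁻¹ * Pi) P⁻¹ S, mul_assoc P⁻¹ Pi (P⁻¹ * S), ← mul_assoc Pi P⁻¹ S,
        hPiS, hPiPA, ← mul_assoc, hPinv, one_mul]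
    calc A * S⁻¹ = (P⁻¹ * Pi * P⁻¹ * S) * S⁻¹ := by rw [h1]
      _ = P⁻¹ * Pi * P⁻¹ := by rw [mul_assoc, hSinv', mul_one]
  have hc : (Fintype.card G : ℝ) ≠ 0 := Nat.cast_ne_zero.mpr Fintype.card_ne_zero
  rw [smul_mul_assoc, smul_smul, mul_inv_cancel₀ hc, one_smul, hASinv, mul_assoc]
end

section
/- Let G be a finite cyclic group with generator g₀ and orthogonal representation ρ on ℝ^{d0}, X ∈ ℝ^{d0×n} with X X^T positive definite, Y ∈ ℝ^{dL×n}, G = I_{d0} − ρ(g₀), and r < d0 − rank(G). Let Ŵ^{da} be the global minimizer (rank-r truncated SVD solution) of the data-augmented objective (1/(n|G|)) Σ_{g∈G} ‖W ρ(g) X − Y‖_F² over rank(W) ≤ r, and let Ŵ^{inv} be the global minimizer of (1/n)‖W X − Y‖_F² over W with W G = 0 and rank(W) ≤ r (each assumed unique, i.e., the relevant r-th and (r+1)-st singular values of the respective target matrices are distinct and the targets have rank exceeding r). Then Ŵ^{da} = Ŵ^{inv}. -/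
open Matrix

open Polynomial in
lemma eq_of_sorted_spectra {d : ℕ} {U W : Matrix (Fin d) (Fin d) ℝ} {a b : Fin d → ℝ}
    (hU : Uᵀ * U = 1) (hW : Wᵀ * W = 1)
    (h : U * Matrix.diagonal a * Uᵀ = W * Matrix.diagonal b * Wᵀ)
    (ha : ∀ i j : Fin d, i ≤ j → a j ≤ a i) (hb : ∀ i j : Fin d, i ≤ j → b j ≤ b i) :
    a = b := by
  have hU' : U * Uᵀ = 1 := mul_eq_one_comm.mp hU
  have hW' : W * Wᵀ = 1 := mul_eq_one_comm.mp hW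
  have hdet : ∀ x : ℝ, ∏ i, (x - a i) = ∏ i, (x - b i) := by
    intro x
    have key : ∀ (M : Matrix (Fin d) (Fin d) ℝ) (c : Fin d → ℝ), M * Mᵀ = 1 →
        det (x • (1 : Matrix (Fin d) (Fin d) ℝ) - M * Matrix.diagonal c * Mᵀ)
          = ∏ i, (x - c i) := by
      intro M c hM
      have e1 : (Matrix.diagonal fun i : Fin d => x - c i)
          = x • (1 : Matrix (Fin d) (Fin d) ℝ) - Matrix.diagonal c := by
        ext i j
        by_cases hij : i = j <;>
          simp [Matrix.diagonal_apply, hij, Matrix.one_apply, Matrix.sub_apply,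
            Matrix.smul_apply]
      have e2 : x • (1 : Matrix (Fin d) (Fin d) ℝ) - M * Matrix.diagonal c * Mᵀ
          = M * (Matrix.diagonal fun i : Fin d => x - c i) * Mᵀ := by
        rw [e1, Matrix.mul_sub, Matrix.sub_mul, Matrix.mul_smul, Matrix.mul_one,
          Matrix.smul_mul, hM]
      rw [e2, det_mul, det_mul]
      have : det M * det (Matrix.diagonal fun i : Fin d => x - c i) * det Mᵀ
          = det M * det Mᵀ * det (Matrix.diagonal fun i : Fin d => x - c i) := by ring
      rw [this, ← det_mul, hM, det_one, one_mul, det_diagonal]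
    rw [← key U a hU', ← key W b hW', h]
  have hpoly : (∏ i, (X - C (a i)) : ℝ[X]) = ∏ i, (X - C (b i)) := by
    apply Polynomial.funext
    intro x
    simpa [Polynomial.eval_prod] using hdet x
  have hroots : Multiset.map a Finset.univ.val = Multiset.map b Finset.univ.val := by
    have ra := Polynomial.roots_multiset_prod_X_sub_C (Multiset.map a Finset.univ.val)
    have rb := Polynomial.roots_multiset_prod_X_sub_C (Multiset.map b Finset.univ.val)
    rw [Multiset.map_map] at ra rb
    have ea : ((Multiset.map (fun i => (X : ℝ[X]) - C (a i)) Finset.univ.val)).prod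
        = ∏ i, (X - C (a i)) := (Finset.prod_eq_multiset_prod _ _).symm
    have eb : ((Multiset.map (fun i => (X : ℝ[X]) - C (b i)) Finset.univ.val)).prod
        = ∏ i, (X - C (b i)) := (Finset.prod_eq_multiset_prod _ _).symm
    rw [show ((fun c => (X : ℝ[X]) - C c) ∘ a) = fun i => (X : ℝ[X]) - C (a i) from rfl] at ra
    rw [show ((fun c => (X : ℝ[X]) - C c) ∘ b) = fun i => (X : ℝ[X]) - C (b i) from rfl] at rb
    rw [ea] at ra
    rw [eb] at rb
    rw [← ra, ← rb, hpoly]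
  have e : ∀ f : Fin d → ℝ, (↑(List.ofFn f) : Multiset ℝ) = Multiset.map f Finset.univ.val := by
    intro f
    have : (Finset.univ.val : Multiset (Fin d)) = ↑(List.finRange d) := by
      rfl
    rw [List.ofFn_eq_map, this, Multiset.map_coe]
  have hlist : (List.ofFn a : Multiset ℝ) = (List.ofFn b : Multiset ℝ) := by
    rw [e, e, hroots]
  have hperm : (List.ofFn a).Perm (List.ofFn b) := Multiset.coe_eq_coe.mp hlist
  have hsa : (List.ofFn a).Pairwise (fun x y => y ≤ x) :=
    List.pairwise_ofFn.mpr fun i j hij => ha i j hij.le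
  have hsb : (List.ofFn b).Pairwise (fun x y => y ≤ x) :=
    List.pairwise_ofFn.mpr fun i j hij => hb i j hij.le
  have : Std.Antisymm (fun x y : ℝ => y ≤ x) := ⟨fun _ _ h1 h2 => le_antisymm h2 h1⟩
  exact List.ofFn_injective (List.Perm.eq_of_pairwise' hsa hsb hperm)

lemma matrix_ext_mulVec {n m : ℕ} {A B : Matrix (Fin n) (Fin m) ℝ}
    (h : ∀ x : Fin m → ℝ, A *ᵥ x = B *ᵥ x) : A = B := by
  ext i j
  have := congrFun (h (Pi.single j 1)) i
  simpa [Matrix.mulVec_single] using this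


lemma proj_match {d : ℕ} {U W : Matrix (Fin d) (Fin d) ℝ} {a b : Fin d → ℝ} (r : ℕ)
    (hU : Uᵀ * U = 1) (hW : Wᵀ * W = 1)
    (h : U * Matrix.diagonal a * Uᵀ = W * Matrix.diagonal b * Wᵀ)
    (ha : ∀ i j : Fin d, i ≤ j → a j ≤ a i) (hb : ∀ i j : Fin d, i ≤ j → b j ≤ b i)
    (hgap : ∀ i j : Fin d, (i : ℕ) < r → r ≤ (j : ℕ) → a j < a i) :
    U * Matrix.diagonal (fun i : Fin d => if (i : ℕ) < r then (1 : ℝ) else 0) * Uᵀ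
      = W * Matrix.diagonal (fun i : Fin d => if (i : ℕ) < r then (1 : ℝ) else 0) * Wᵀ := by
  have hU' : U * Uᵀ = 1 := mul_eq_one_comm.mp hU
  have hW' : W * Wᵀ = 1 := mul_eq_one_comm.mp hW
  have hab : a = b := eq_of_sorted_spectra hU hW h ha hb
  subst hab
  set M := Uᵀ * W with hM
  have hMo : Mᵀ * M = 1 := by
    have : Mᵀ * M = Wᵀ * (U * Uᵀ) * W := by
      simp [hM, Matrix.transpose_mul, Matrix.mul_assoc]
    rw [this, hU', Matrix.mul_one, hW]
  have hMo' : M * Mᵀ = 1 := mul_eq_one_comm.mp hMo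
  have hcomm : Matrix.diagonal a * M = M * Matrix.diagonal a := by
    have h1 : Uᵀ * (U * Matrix.diagonal a * Uᵀ) * W = Matrix.diagonal a * M := by
      calc Uᵀ * (U * Matrix.diagonal a * Uᵀ) * W
          = (Uᵀ * U) * Matrix.diagonal a * (Uᵀ * W) := by
            simp only [Matrix.mul_assoc]
      _ = Matrix.diagonal a * M := by rw [hU, Matrix.one_mul, hM]
    have h2 : Uᵀ * (W * Matrix.diagonal a * Wᵀ) * W = M * Matrix.diagonal a := by
      calc Uᵀ * (W * Matrix.diagonal a * Wᵀ) * W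
          = (Uᵀ * W) * Matrix.diagonal a * (Wᵀ * W) := by
            simp only [Matrix.mul_assoc]
      _ = M * Matrix.diagonal a := by rw [hW, Matrix.mul_one, hM]
    rw [← h1, ← h2, h]
  have key : ∀ i j : Fin d, a i ≠ a j → M i j = 0 := by
    intro i j hne
    have hc := congrFun (congrFun hcomm i) j
    rw [Matrix.diagonal_mul, Matrix.mul_diagonal] at hc
    have hz : M i j * (a i - a j) = 0 := by
      rw [mul_sub, mul_comm (M i j) (a i), hc, sub_self]
    rcases mul_eq_zero.mp hz with h' | h'
    · exact h'
    · exact absurd (by linarith : a i = a j) hne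
  have hEM : Matrix.diagonal (fun i : Fin d => if (i : ℕ) < r then (1 : ℝ) else 0) * M
      = M * Matrix.diagonal (fun i : Fin d => if (i : ℕ) < r then (1 : ℝ) else 0) := by
    ext i j
    rw [Matrix.diagonal_mul, Matrix.mul_diagonal]
    by_cases hi : (i : ℕ) < r <;> by_cases hj : (j : ℕ) < r
    · simp [hi, hj]
    · simp only [if_pos hi, if_neg hj, one_mul, mul_zero]
      exact key i j (hgap i j hi (le_of_not_gt hj)).ne'
    · simp only [if_neg hi, if_pos hj, zero_mul, mul_one]
      exact (key i j (hgap j i hj (le_of_not_gt hi)).ne).symm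
    · simp [hi, hj]
  have hWU : W = U * M := by
    rw [hM, ← Matrix.mul_assoc, hU', Matrix.one_mul]
  rw [hWU, Matrix.transpose_mul]
  set E := Matrix.diagonal (fun i : Fin d => if (i : ℕ) < r then (1 : ℝ) else 0) with hE
  have h1 : U * E * Uᵀ = U * (E * M) * (Mᵀ * Uᵀ) := by
    have h2 : U * (E * M) * (Mᵀ * Uᵀ) = U * E * (M * Mᵀ) * Uᵀ := by
      simp only [Matrix.mul_assoc]
    rw [h2, hMo', Matrix.mul_one]
  rw [h1, hEM]
  simp only [Matrix.mul_assoc]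

lemma pdiag_mul_transpose (n m : ℕ) (sv : ℕ → ℝ) :
    pdiag n m sv * (pdiag n m sv)ᵀ
      = Matrix.diagonal (fun i : Fin n => if (i : ℕ) < m then sv i ^ 2 else 0) := by
  ext i j
  rw [Matrix.mul_apply]
  by_cases hij : i = j
  · subst hij
    rw [Matrix.diagonal_apply_eq]
    by_cases hi : (i : ℕ) < m
    · rw [if_pos hi, Finset.sum_eq_single ⟨(i : ℕ), hi⟩]
      · simp [pdiag, sq]
      · intro k _ hk
        have : (i : ℕ) ≠ (k : ℕ) := fun hc => hk (by ext; simp [← hc])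
        simp [pdiag, this]
      · simp
    · rw [if_neg hi]
      apply Finset.sum_eq_zero
      intro k _
      have : (i : ℕ) ≠ (k : ℕ) := fun hc => hi (hc ▸ k.isLt)
      simp [pdiag, this]
  · rw [Matrix.diagonal_apply_ne _ hij]
    apply Finset.sum_eq_zero
    intro k _
    have : (i : ℕ) ≠ (j : ℕ) := fun hc => hij (Fin.ext hc)
    by_cases h1 : (i : ℕ) = (k : ℕ)
    · have h2 : (j : ℕ) ≠ (k : ℕ) := fun hc => this (h1.trans hc.symm)
      simp [pdiag, h2]
    · simp [pdiag, h1]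

lemma trunc_eq_proj_mul (n m : ℕ) (sv : ℕ → ℝ) (r : ℕ) :
    Matrix.diagonal (fun i : Fin n => if (i : ℕ) < r then (1 : ℝ) else 0) * pdiag n m sv
      = pdiagTrunc n m sv r := by
  ext i j
  rw [Matrix.diagonal_mul]
  by_cases hi : (i : ℕ) < r <;> by_cases hij : (i : ℕ) = (j : ℕ) <;>
    simp [pdiag, pdiagTrunc, hi, hij]

lemma rank_pdiag_le {n m n' m' : ℕ} (sv : ℕ → ℝ) (r : ℕ) (hsv : ∀ j, r ≤ j → sv j = 0)
    (A : Matrix (Fin n') (Fin n) ℝ) (B : Matrix (Fin m) (Fin m') ℝ) :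
    (A * pdiag n m sv * B).rank ≤ r := by
  have hfact : pdiag n m sv
      = Matrix.diagonal (fun i : Fin n => if (i : ℕ) < r then (1 : ℝ) else 0)
        * pdiag n m sv := by
    rw [trunc_eq_proj_mul]
    ext i j
    by_cases hij : (i : ℕ) = (j : ℕ)
    · by_cases hi : (i : ℕ) < r
      · have hi' : (j : ℕ) < r := hij ▸ hi
        simp [pdiag, pdiagTrunc, hij, hi']
      · have hi' : ¬ (j : ℕ) < r := hij ▸ hi
        simp [pdiag, pdiagTrunc, hij, hi', hsv _ (le_of_not_gt hi')]
    · simp [pdiag, pdiagTrunc, hij]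
  have hE : (Matrix.diagonal (fun i : Fin n => if (i : ℕ) < r then (1 : ℝ) else 0)).rank
      ≤ r := by
    rw [Matrix.rank_diagonal]
    have : Function.Injective
        (fun x : {i : Fin n // (if (i : ℕ) < r then (1 : ℝ) else 0) ≠ 0} =>
          (⟨(x.1 : ℕ), by
            by_contra hc
            exact x.2 (if_neg (fun h => hc h))⟩ : Fin r)) := by
      intro x y hxy
      have h2 := congrArg Fin.val hxy
      simp only at h2
      exact Subtype.ext (Fin.ext h2)
    simpa using Fintype.card_le_of_injective _ this
  calc (A * pdiag n m sv * B).rank ≤ (A * pdiag n m sv).rank := Matrix.rank_mul_le_left _ _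
    _ = (A * (Matrix.diagonal (fun i : Fin n => if (i : ℕ) < r then (1 : ℝ) else 0)
          * pdiag n m sv)).rank := by rw [← hfact]
    _ ≤ _ := by
        rw [← Matrix.mul_assoc]
        calc ((A * Matrix.diagonal fun i : Fin n => if (i : ℕ) < r then (1:ℝ) else 0)
              * pdiag n m sv).rank
            ≤ (A * Matrix.diagonal fun i : Fin n => if (i : ℕ) < r then (1:ℝ) else 0).rank :=
              Matrix.rank_mul_le_left _ _
          _ ≤ (Matrix.diagonal fun i : Fin n => if (i : ℕ) < r then (1:ℝ) else 0).rank :=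
              Matrix.rank_mul_le_right _ _
          _ ≤ r := hE

lemma sum_mulVec' {d : ℕ} {ι : Type*} (s : Finset ι) (f : ι → Matrix (Fin d) (Fin d) ℝ)
    (v : Fin d → ℝ) : (∑ i ∈ s, f i) *ᵥ v = ∑ i ∈ s, f i *ᵥ v := by
  classical
  induction s using Finset.induction with
  | empty => simp [Matrix.zero_mulVec]
  | insert a s h ih => simp [Finset.sum_insert h, Matrix.add_mulVec, ih]


/-- **Theorem `global_optima_da_inv`.** Let `G` be a finite cyclic group
with generator `g₀` and orthogonal representation `ρ` on `ℝ^{d0}`, `X Xᵀ` positive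
definite with square root `P`, `Gmat = I − ρ(g₀)`, `r < d0 − rank(P⁻¹ Gmat)`.  Let
`Ŵ^{da} = Ū_r Σ̄_r V̄_rᵀ Q⁻¹` be the rank-`r` truncated-SVD global minimizer of the
data-augmented objective, where `Q² = Σ_g ρ(g) X Xᵀ ρ(g)ᵀ` and `Ū Σ̄ V̄ᵀ` is an SVD of
`|G| Y Xᵀ Ḡᵀ Q⁻¹` with `Ḡ = (1/|G|) Σ_g ρ(g)`; and let
`Ŵ^{inv} = Ū'_r Σ̄'_r V̄'_rᵀ P⁻¹` where `Ū' Σ̄' V̄'ᵀ` is an SVD of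
`Y Xᵀ P⁻¹ (I − G̃ G̃⁺)` with `G̃ = P⁻¹ Gmat`.  Assume each target matrix has rank
exceeding `r` and the retained singular values strictly exceed the discarded ones (so
each minimizer is unique).  Then `Ŵ^{da} = Ŵ^{inv}`. -/
theorem data_augmentation_equals_constrained {G : Type*} [Group G] [Fintype G]
    (d0 dL n r : ℕ) (g₀ : G) (hgen : ∀ h : G, h ∈ Subgroup.zpowers g₀)
    (ρ : G →* Matrix (Fin d0) (Fin d0) ℝ)
    (horth : ∀ g : G, (ρ g)ᵀ * ρ g = 1)
    (X : Matrix (Fin d0) (Fin n) ℝ) (Y : Matrix (Fin dL) (Fin n) ℝ)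
    (hXX : (X * Xᵀ).PosDef)
    (P : Matrix (Fin d0) (Fin d0) ℝ) (hP : P.PosDef) (hPsq : P * P = X * Xᵀ)
    (Q : Matrix (Fin d0) (Fin d0) ℝ) (hQ : Q.PosDef)
    (hQsq : Q * Q = ∑ g : G, ρ g * (X * Xᵀ) * (ρ g)ᵀ)
    -- Moore–Penrose pseudoinverse of `G̃ = P⁻¹ (1 - ρ g₀)`
    (Gp : Matrix (Fin d0) (Fin d0) ℝ)
    (hGp1 : (P⁻¹ * (1 - ρ g₀)) * Gp * (P⁻¹ * (1 - ρ g₀)) = P⁻¹ * (1 - ρ g₀))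
    (hGp2 : Gp * (P⁻¹ * (1 - ρ g₀)) * Gp = Gp)
    (hGp3 : ((P⁻¹ * (1 - ρ g₀)) * Gp)ᵀ = (P⁻¹ * (1 - ρ g₀)) * Gp)
    (hGp4 : (Gp * (P⁻¹ * (1 - ρ g₀)))ᵀ = Gp * (P⁻¹ * (1 - ρ g₀)))
    (hr : r < d0 - (P⁻¹ * (1 - ρ g₀)).rank)
    -- SVD of the data-augmentation target `Z̄^{da} = |G| Y Xᵀ Ḡᵀ Q⁻¹`
    (U : Matrix (Fin dL) (Fin dL) ℝ) (V : Matrix (Fin d0) (Fin d0) ℝ) (svda : ℕ → ℝ)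
    (hU : Uᵀ * U = 1) (hV : Vᵀ * V = 1)
    (hsvda_mono : ∀ i j : ℕ, i ≤ j → svda j ≤ svda i) (hsvda_nonneg : ∀ i, 0 ≤ svda i)
    (hSVDda : (Fintype.card G : ℝ) •
        (Y * Xᵀ * ((Fintype.card G : ℝ)⁻¹ • ∑ g : G, ρ g)ᵀ * Q⁻¹)
      = U * pdiag dL d0 svda * Vᵀ)
    (hrank_da : r <
      ((Fintype.card G : ℝ) •
        (Y * Xᵀ * ((Fintype.card G : ℝ)⁻¹ • ∑ g : G, ρ g)ᵀ * Q⁻¹)).rank)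
    (hgap_da : ∀ i j : ℕ, i < r → r ≤ j → svda j < svda i)
    -- SVD of the constrained target `Z̄^{inv} = Y Xᵀ P⁻¹ (I − G̃ G̃⁺)`
    (U' : Matrix (Fin dL) (Fin dL) ℝ) (V' : Matrix (Fin d0) (Fin d0) ℝ) (svinv : ℕ → ℝ)
    (hU' : U'ᵀ * U' = 1) (hV' : V'ᵀ * V' = 1)
    (hsvinv_mono : ∀ i j : ℕ, i ≤ j → svinv j ≤ svinv i) (hsvinv_nonneg : ∀ i, 0 ≤ svinv i)
    (hSVDinv : Y * Xᵀ * P⁻¹ * (1 - (P⁻¹ * (1 - ρ g₀)) * Gp)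
      = U' * pdiag dL d0 svinv * V'ᵀ)
    (hrank_inv : r < (Y * Xᵀ * P⁻¹ * (1 - (P⁻¹ * (1 - ρ g₀)) * Gp)).rank)
    (hgap_inv : ∀ i j : ℕ, i < r → r ≤ j → svinv j < svinv i) :
    U * pdiagTrunc dL d0 svda r * Vᵀ * Q⁻¹
      = U' * pdiagTrunc dL d0 svinv r * V'ᵀ * P⁻¹ := by
  classical
  -- abbreviations
  set S : Matrix (Fin d0) (Fin d0) ℝ := ∑ g : G, ρ g with hSdef
  set c : ℝ := (Fintype.card G : ℝ) with hcdef
  have hc0 : c ≠ 0 := Nat.cast_ne_zero.mpr Fintype.card_ne_zero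
  -- invertibility
  have hPdet : IsUnit P.det := isUnit_iff_ne_zero.mpr hP.det_pos.ne'
  have hQdet : IsUnit Q.det := isUnit_iff_ne_zero.mpr hQ.det_pos.ne'
  have hPP : P * P⁻¹ = 1 := Matrix.mul_nonsing_inv P hPdet
  have hPP' : P⁻¹ * P = 1 := Matrix.nonsing_inv_mul P hPdet
  have hQ2det : IsUnit (Q * Q).det := by rw [Matrix.det_mul]; exact hQdet.mul hQdet
  have hQ2inv : (Q * Q) * (Q * Q)⁻¹ = 1 := Matrix.mul_nonsing_inv _ hQ2det
  have hQ2inv' : (Q * Q)⁻¹ * (Q * Q) = 1 := Matrix.nonsing_inv_mul _ hQ2det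
  -- symmetry of P, Q
  have hPt : Pᵀ = P := by
    have := hP.1
    rwa [Matrix.IsHermitian, Matrix.conjTranspose_eq_transpose_of_trivial] at this
  have hQt : Qᵀ = Q := by
    have := hQ.1
    rwa [Matrix.IsHermitian, Matrix.conjTranspose_eq_transpose_of_trivial] at this
  have hPinvT : (P⁻¹)ᵀ = P⁻¹ := by rw [Matrix.transpose_nonsing_inv, hPt]
  have hQinvT : (Q⁻¹)ᵀ = Q⁻¹ := by rw [Matrix.transpose_nonsing_inv, hQt]
  have hQ2t : (Q * Q)ᵀ = Q * Q := by rw [Matrix.transpose_mul, hQt]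
  have hQ2invT : ((Q * Q)⁻¹)ᵀ = (Q * Q)⁻¹ := by rw [Matrix.transpose_nonsing_inv, hQ2t]
  -- representation facts
  have hρright : ∀ g : G, ρ g * (ρ g)ᵀ = 1 := by
    intro g
    have h1 : (ρ g)ᵀ * ρ g = 1 := horth g
    exact mul_eq_one_comm.mp h1
  have hρinv : ∀ g : G, (ρ g)ᵀ = ρ g⁻¹ := by
    intro g
    have h1 : ρ g * ρ g⁻¹ = 1 := by rw [← MonoidHom.map_mul, mul_inv_cancel, MonoidHom.map_one]
    calc (ρ g)ᵀ = (ρ g)ᵀ * (ρ g * ρ g⁻¹) := by rw [h1, Matrix.mul_one]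
      _ = ((ρ g)ᵀ * ρ g) * ρ g⁻¹ := by rw [Matrix.mul_assoc]
      _ = ρ g⁻¹ := by rw [horth, Matrix.one_mul]
  -- S facts
  have hSl : ∀ h : G, ρ h * S = S := by
    intro h
    rw [hSdef, Finset.mul_sum]
    calc (∑ g : G, ρ h * ρ g) = ∑ g : G, ρ (h * g) := by
          refine Finset.sum_congr rfl fun g _ => ?_
          rw [MonoidHom.map_mul]
      _ = ∑ g : G, ρ g := Fintype.sum_equiv (Equiv.mulLeft h) _ _ (fun g => rfl)
  have hSr : ∀ h : G, S * ρ h = S := by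
    intro h
    rw [hSdef, Finset.sum_mul]
    calc (∑ g : G, ρ g * ρ h) = ∑ g : G, ρ (g * h) := by
          refine Finset.sum_congr rfl fun g _ => ?_
          rw [MonoidHom.map_mul]
      _ = ∑ g : G, ρ g := Fintype.sum_equiv (Equiv.mulRight h) _ _ (fun g => rfl)
  have hSt : Sᵀ = S := by
    rw [hSdef, Matrix.transpose_sum]
    calc (∑ g : G, (ρ g)ᵀ) = ∑ g : G, ρ g⁻¹ := Finset.sum_congr rfl fun g _ => hρinv g
      _ = ∑ g : G, ρ g := Fintype.sum_equiv (Equiv.inv G) _ _ (fun g => rfl)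
  have hSS : S * S = c • S := by
    nth_rewrite 1 [hSdef]
    rw [Finset.sum_mul]
    calc (∑ g : G, ρ g * S) = ∑ _g : G, S := Finset.sum_congr rfl fun g _ => hSl g
      _ = (Fintype.card G) • S := by rw [Finset.sum_const, Finset.card_univ]
      _ = c • S := (Nat.cast_smul_eq_nsmul ℝ _ S).symm
  -- Q² commutes with S
  have hQ2ρ : ∀ h : G, ρ h * (Q * Q) = (Q * Q) * ρ h := by
    intro h
    have h1 : ρ h * (Q * Q) * (ρ h)ᵀ = Q * Q := by
      rw [hQsq, Finset.mul_sum, Finset.sum_mul]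
      calc (∑ g : G, ρ h * (ρ g * (X * Xᵀ) * (ρ g)ᵀ) * (ρ h)ᵀ)
          = ∑ g : G, ρ (h * g) * (X * Xᵀ) * (ρ (h * g))ᵀ := by
            refine Finset.sum_congr rfl fun g _ => ?_
            rw [MonoidHom.map_mul, Matrix.transpose_mul]
            simp only [Matrix.mul_assoc]
        _ = ∑ g : G, ρ g * (X * Xᵀ) * (ρ g)ᵀ :=
            Fintype.sum_equiv (Equiv.mulLeft h) _ _ (fun g => rfl)
    calc ρ h * (Q * Q) = ρ h * (Q * Q) * ((ρ h)ᵀ * ρ h) := by rw [horth, Matrix.mul_one]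
      _ = (ρ h * (Q * Q) * (ρ h)ᵀ) * ρ h := by simp only [Matrix.mul_assoc]
      _ = (Q * Q) * ρ h := by rw [h1]
  have hSQ2 : S * (Q * Q) = (Q * Q) * S := by
    nth_rewrite 1 [hSdef]
    rw [Finset.sum_mul]
    calc (∑ g : G, ρ g * (Q * Q)) = ∑ g : G, (Q * Q) * ρ g :=
          Finset.sum_congr rfl fun g _ => hQ2ρ g
      _ = (Q * Q) * S := by rw [hSdef, Finset.mul_sum]
  have hSQ2i : S * (Q * Q)⁻¹ = (Q * Q)⁻¹ * S := by
    calc S * (Q * Q)⁻¹ = (Q * Q)⁻¹ * ((Q * Q) * (S * (Q * Q)⁻¹)) := by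
          rw [← Matrix.mul_assoc, ← Matrix.mul_assoc, hQ2inv', Matrix.one_mul]
      _ = (Q * Q)⁻¹ * (((Q * Q) * S) * (Q * Q)⁻¹) := by simp only [Matrix.mul_assoc]
      _ = (Q * Q)⁻¹ * ((S * (Q * Q)) * (Q * Q)⁻¹) := by rw [hSQ2]
      _ = (Q * Q)⁻¹ * S := by
          rw [Matrix.mul_assoc S, hQ2inv, Matrix.mul_one]
  -- key algebra: Q² S = S P² S
  have hQSPS : (Q * Q) * S = S * ((P * P) * S) := by
    rw [hQsq, hPsq, Finset.sum_mul]
    calc (∑ g : G, ρ g * (X * Xᵀ) * (ρ g)ᵀ * S)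
        = ∑ g : G, ρ g * ((X * Xᵀ) * S) := by
          refine Finset.sum_congr rfl fun g _ => ?_
          rw [Matrix.mul_assoc, hρinv, hSl, Matrix.mul_assoc]
      _ = S * ((X * Xᵀ) * S) := by rw [← Finset.sum_mul, ← hSdef]
  have hSQPS : S * ((Q * Q)⁻¹ * ((P * P) * S)) = S := by
    calc S * ((Q * Q)⁻¹ * ((P * P) * S)) = (S * (Q * Q)⁻¹) * ((P * P) * S) :=
          (Matrix.mul_assoc S _ _).symm
      _ = (Q * Q)⁻¹ * (S * ((P * P) * S)) := by rw [hSQ2i, Matrix.mul_assoc]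
      _ = (Q * Q)⁻¹ * ((Q * Q) * S) := by rw [← hQSPS]
      _ = S := by rw [← Matrix.mul_assoc, hQ2inv', Matrix.one_mul]
  -- G̃, R, Π
  set Gt : Matrix (Fin d0) (Fin d0) ℝ := P⁻¹ * (1 - ρ g₀) with hGtdef
  set R : Matrix (Fin d0) (Fin d0) ℝ := P * (S * ((Q * Q)⁻¹ * P)) with hRdef
  set Pi : Matrix (Fin d0) (Fin d0) ℝ := 1 - Gt * Gp with hPidef
  have hGtT : Gtᵀ = (1 - ρ g₀⁻¹) * P⁻¹ := by
    rw [hGtdef, Matrix.transpose_mul, Matrix.transpose_sub, Matrix.transpose_one, hρinv, hPinvT]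
  have hGtTR : Gtᵀ * R = 0 := by
    rw [hGtT, hRdef]
    calc (1 - ρ g₀⁻¹) * P⁻¹ * (P * (S * ((Q * Q)⁻¹ * P)))
        = (1 - ρ g₀⁻¹) * ((P⁻¹ * P) * (S * ((Q * Q)⁻¹ * P))) := by
          simp only [Matrix.mul_assoc]
      _ = (1 - ρ g₀⁻¹) * (S * ((Q * Q)⁻¹ * P)) := by rw [hPP', Matrix.one_mul]
      _ = 0 := by
          rw [Matrix.sub_mul, Matrix.one_mul, ← Matrix.mul_assoc (ρ g₀⁻¹) S, hSl, sub_self]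
  have hRGt : R * Gt = 0 := by
    rw [hGtdef, hRdef]
    calc P * (S * ((Q * Q)⁻¹ * P)) * (P⁻¹ * (1 - ρ g₀))
        = P * (S * ((Q * Q)⁻¹ * ((P * P⁻¹) * (1 - ρ g₀)))) := by
          simp only [Matrix.mul_assoc]
      _ = P * (S * ((Q * Q)⁻¹ * (1 - ρ g₀))) := by rw [hPP, Matrix.one_mul]
      _ = P * ((Q * Q)⁻¹ * (S * (1 - ρ g₀))) := by
          rw [← Matrix.mul_assoc S, hSQ2i, Matrix.mul_assoc]
      _ = 0 := by
          rw [Matrix.mul_sub, Matrix.mul_one, hSr, sub_self, Matrix.mul_zero, Matrix.mul_zero]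
  have hGtGpR : (Gt * Gp) * R = 0 := by
    calc Gt * Gp * R = (Gt * Gp)ᵀ * R := by rw [hGp3]
      _ = Gpᵀ * (Gtᵀ * R) := by rw [Matrix.transpose_mul, Matrix.mul_assoc]
      _ = 0 := by rw [hGtTR, Matrix.mul_zero]
  have hPiR : Pi * R = R := by
    rw [hPidef, Matrix.sub_mul, Matrix.one_mul, hGtGpR, sub_zero]
  have hGtTGt : Gtᵀ * (Gt * Gp) = Gtᵀ := by
    have h2 : (Gt * Gp)ᵀ * Gt = Gt := by rw [hGp3]; exact hGp1
    have h1 : Gpᵀ * (Gtᵀ * Gt) = Gt := by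
      rw [← Matrix.mul_assoc, ← Matrix.transpose_mul]
      exact h2
    have h3 := congrArg Matrix.transpose h1
    rw [Matrix.transpose_mul, Matrix.transpose_mul, Matrix.transpose_transpose,
      Matrix.transpose_transpose] at h3
    rw [← Matrix.mul_assoc]
    exact h3
  have hGtTPi : Gtᵀ * Pi = 0 := by
    rw [hPidef, Matrix.mul_sub, Matrix.mul_one, hGtTGt, sub_self]
  -- pointwise fixed-point fact
  have hfixR : ∀ x : Fin d0 → ℝ, Gtᵀ *ᵥ x = 0 → R *ᵥ x = x := by
    intro x hx
    set y : Fin d0 → ℝ := P⁻¹ *ᵥ x with hy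
    have hxy : P *ᵥ y = x := by rw [hy, Matrix.mulVec_mulVec, hPP, Matrix.one_mulVec]
    have hg0y : ρ g₀⁻¹ *ᵥ y = y := by
      have h1 : ((1 - ρ g₀⁻¹) * P⁻¹) *ᵥ x = 0 := by rw [← hGtT]; exact hx
      rw [← Matrix.mulVec_mulVec, Matrix.sub_mulVec, Matrix.one_mulVec] at h1
      exact (sub_eq_zero.mp h1).symm
    have hally : ∀ g : G, ρ g *ᵥ y = y := by
      let H : Subgroup G :=
        { carrier := {g : G | ρ g *ᵥ y = y}
          one_mem' := by
            show ρ 1 *ᵥ y = y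
            rw [MonoidHom.map_one, Matrix.one_mulVec]
          mul_mem' := by
            intro p q hp hq
            show ρ (p * q) *ᵥ y = y
            have hp' : ρ p *ᵥ y = y := hp
            have hq' : ρ q *ᵥ y = y := hq
            rw [MonoidHom.map_mul, ← Matrix.mulVec_mulVec, hq', hp']
          inv_mem' := by
            intro p hp
            show ρ p⁻¹ *ᵥ y = y
            have hp' : ρ p *ᵥ y = y := hp
            conv_lhs => rw [← hp']
            rw [Matrix.mulVec_mulVec, ← MonoidHom.map_mul, inv_mul_cancel, MonoidHom.map_one,
              Matrix.one_mulVec] }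
      have hg₀H : g₀ ∈ H := by
        have hmem : g₀⁻¹ ∈ H := hg0y
        simpa using H.inv_mem hmem
      intro g
      exact Subgroup.zpowers_le.mpr hg₀H (hgen g)
    have hSy : S *ᵥ y = c • y := by
      rw [hSdef, sum_mulVec']
      calc (∑ g : G, ρ g *ᵥ y) = ∑ _g : G, y := Finset.sum_congr rfl fun g _ => hally g
        _ = (Fintype.card G) • y := by rw [Finset.sum_const, Finset.card_univ]
        _ = c • y := (Nat.cast_smul_eq_nsmul ℝ _ y).symm
    have hm : (S * ((Q * Q)⁻¹ * (P * P))) * S = S := by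
      calc (S * ((Q * Q)⁻¹ * (P * P))) * S = S * ((Q * Q)⁻¹ * ((P * P) * S)) := by
            simp only [Matrix.mul_assoc]
        _ = S := hSQPS
    have hmid : (S * ((Q * Q)⁻¹ * (P * P))) *ᵥ y = y := by
      have h1 : (S * ((Q * Q)⁻¹ * (P * P))) *ᵥ (c • y) = c • y := by
        rw [← hSy, Matrix.mulVec_mulVec, hm]
      rw [Matrix.mulVec_smul] at h1
      exact smul_right_injective _ hc0 h1
    have hRP : R * P = P * (S * ((Q * Q)⁻¹ * (P * P))) := by
      rw [hRdef]; simp only [Matrix.mul_assoc]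
    rw [← hxy, Matrix.mulVec_mulVec, hRP, ← Matrix.mulVec_mulVec, hmid]
  have hRPi : R * Pi = Pi := by
    apply matrix_ext_mulVec
    intro x
    rw [← Matrix.mulVec_mulVec]
    refine hfixR _ ?_
    rw [Matrix.mulVec_mulVec, hGtTPi, Matrix.zero_mulVec]
  -- symmetry of R and Pi
  have hcommS : S * ((Q * Q)⁻¹ * P) = (Q * Q)⁻¹ * (S * P) := by
    rw [← Matrix.mul_assoc, hSQ2i, Matrix.mul_assoc]
  have hRt : Rᵀ = R := by
    rw [hRdef]
    simp only [Matrix.transpose_mul, hPt, hSt, hQ2invT]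
    rw [hcommS]
    simp only [Matrix.mul_assoc]
  have hPit : Piᵀ = Pi := by
    rw [hPidef, Matrix.transpose_sub, Matrix.transpose_one, hGp3]
  have hPiEqR : Pi = R := by
    have h1 : R * Pi = R := by
      have h2 := congrArg Matrix.transpose hPiR
      rwa [Matrix.transpose_mul, hPit, hRt] at h2
    rw [← hRPi, h1]
  have hmid2 : P⁻¹ * (Pi * P⁻¹) = S * (Q * Q)⁻¹ := by
    rw [hPiEqR, hRdef]
    calc P⁻¹ * (P * (S * ((Q * Q)⁻¹ * P)) * P⁻¹)
        = (P⁻¹ * P) * (S * ((Q * Q)⁻¹ * (P * P⁻¹))) := by simp only [Matrix.mul_assoc]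
      _ = S * (Q * Q)⁻¹ := by rw [hPP', hPP, Matrix.one_mul, Matrix.mul_one]
  -- Z_da simplification
  have hQQinv : Q⁻¹ * Q⁻¹ = (Q * Q)⁻¹ := (Matrix.mul_inv_rev Q Q).symm
  have hconv : c • (Y * Xᵀ * (c⁻¹ • S)ᵀ * Q⁻¹) = Y * Xᵀ * S * Q⁻¹ := by
    rw [Matrix.transpose_smul, hSt, Matrix.mul_smul, Matrix.smul_mul, smul_smul,
      mul_inv_cancel₀ hc0, one_smul]
  have hSVDda' : Y * Xᵀ * S * Q⁻¹ = U * pdiag dL d0 svda * Vᵀ := by rw [← hconv]; exact hSVDda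
  rw [hconv] at hrank_da
  -- identity I : Zda Q⁻¹ = Zinv P⁻¹
  have hZQP : (Y * Xᵀ * S * Q⁻¹) * Q⁻¹ = (Y * Xᵀ * P⁻¹ * Pi) * P⁻¹ := by
    calc (Y * Xᵀ * S * Q⁻¹) * Q⁻¹ = Y * (Xᵀ * (S * (Q⁻¹ * Q⁻¹))) := by
          simp only [Matrix.mul_assoc]
      _ = Y * (Xᵀ * (S * (Q * Q)⁻¹)) := by rw [hQQinv]
      _ = Y * (Xᵀ * (P⁻¹ * (Pi * P⁻¹))) := by rw [hmid2]
      _ = (Y * Xᵀ * P⁻¹ * Pi) * P⁻¹ := by simp only [Matrix.mul_assoc]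
  -- identity II : Zda Zdaᵀ = c • Zinv Zinvᵀ
  have hSQS : S * ((Q * Q)⁻¹ * S) = c • (S * (Q * Q)⁻¹) := by
    calc S * ((Q * Q)⁻¹ * S) = (S * (Q * Q)⁻¹) * S := (Matrix.mul_assoc _ _ _).symm
      _ = (Q * Q)⁻¹ * S * S := by rw [hSQ2i]
      _ = (Q * Q)⁻¹ * (c • S) := by rw [Matrix.mul_assoc, hSS]
      _ = c • ((Q * Q)⁻¹ * S) := by rw [Matrix.mul_smul]
      _ = c • (S * (Q * Q)⁻¹) := by rw [hSQ2i]
  have hZZda : (Y * Xᵀ * S * Q⁻¹) * (Y * Xᵀ * S * Q⁻¹)ᵀ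
      = c • (Y * (Xᵀ * (S * ((Q * Q)⁻¹ * (X * Yᵀ))))) := by
    have ht : (Y * Xᵀ * S * Q⁻¹)ᵀ = Q⁻¹ * (S * (X * Yᵀ)) := by
      simp only [Matrix.transpose_mul, Matrix.transpose_transpose, hSt, hQinvT,
        Matrix.mul_assoc]
    rw [ht]
    calc (Y * Xᵀ * S * Q⁻¹) * (Q⁻¹ * (S * (X * Yᵀ)))
        = Y * (Xᵀ * (S * ((Q⁻¹ * Q⁻¹) * (S * (X * Yᵀ))))) := by simp only [Matrix.mul_assoc]
      _ = Y * (Xᵀ * (S * ((Q * Q)⁻¹ * (S * (X * Yᵀ))))) := by rw [hQQinv]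
      _ = Y * (Xᵀ * ((S * ((Q * Q)⁻¹ * S)) * (X * Yᵀ))) := by simp only [Matrix.mul_assoc]
      _ = Y * (Xᵀ * ((c • (S * (Q * Q)⁻¹)) * (X * Yᵀ))) := by rw [hSQS]
      _ = c • (Y * (Xᵀ * (S * ((Q * Q)⁻¹ * (X * Yᵀ))))) := by
          rw [Matrix.smul_mul, Matrix.mul_smul, Matrix.mul_smul]
          simp only [Matrix.mul_assoc]
  have hPiPi : Pi * Pi = Pi := by nth_rewrite 1 [hPiEqR]; exact hRPi
  have hZZinv : (Y * Xᵀ * P⁻¹ * Pi) * (Y * Xᵀ * P⁻¹ * Pi)ᵀ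
      = Y * (Xᵀ * (S * ((Q * Q)⁻¹ * (X * Yᵀ)))) := by
    have ht : (Y * Xᵀ * P⁻¹ * Pi)ᵀ = Pi * (P⁻¹ * (X * Yᵀ)) := by
      simp only [Matrix.transpose_mul, Matrix.transpose_transpose, hPit, hPinvT,
        Matrix.mul_assoc]
    rw [ht]
    calc (Y * Xᵀ * P⁻¹ * Pi) * (Pi * (P⁻¹ * (X * Yᵀ)))
        = Y * (Xᵀ * (P⁻¹ * ((Pi * Pi) * (P⁻¹ * (X * Yᵀ))))) := by simp only [Matrix.mul_assoc]
      _ = Y * (Xᵀ * (P⁻¹ * (Pi * (P⁻¹ * (X * Yᵀ))))) := by rw [hPiPi]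
      _ = Y * (Xᵀ * ((P⁻¹ * (Pi * P⁻¹)) * (X * Yᵀ))) := by simp only [Matrix.mul_assoc]
      _ = Y * (Xᵀ * (S * ((Q * Q)⁻¹ * (X * Yᵀ)))) := by
          rw [hmid2]
          simp only [Matrix.mul_assoc]
  -- positivity of leading singular values of the DA target
  have hr_lt_d0 : r < d0 := lt_of_lt_of_le hr (Nat.sub_le _ _)
  have hda_pos : ∀ i : ℕ, i < r → 0 < svda i := by
    intro i hi
    rcases lt_or_ge 0 (svda i) with h | h
    · exact h
    · exfalso
      have hz : svda i = 0 := le_antisymm h (hsvda_nonneg i)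
      have hvan : ∀ j, r ≤ j → svda j = 0 := fun j hj =>
        le_antisymm (hz ▸ hsvda_mono i j (le_trans hi.le hj)) (hsvda_nonneg j)
      have hle := rank_pdiag_le svda r hvan U Vᵀ
      rw [hSVDda'] at hrank_da
      omega
  -- eigendecompositions of the two Gram matrices
  have hAda : (Y * Xᵀ * S * Q⁻¹) * (Y * Xᵀ * S * Q⁻¹)ᵀ
      = U * Matrix.diagonal (fun i : Fin dL => if (i : ℕ) < d0 then svda i ^ 2 else 0)
        * Uᵀ := by
    rw [hSVDda']
    have hVV : ∀ M : Matrix (Fin d0) (Fin dL) ℝ, Vᵀ * (V * M) = M := fun M => by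
      rw [← Matrix.mul_assoc, hV, Matrix.one_mul]
    calc (U * pdiag dL d0 svda * Vᵀ) * (U * pdiag dL d0 svda * Vᵀ)ᵀ
        = U * (pdiag dL d0 svda * (Vᵀ * (V * ((pdiag dL d0 svda)ᵀ * Uᵀ)))) := by
          simp only [Matrix.transpose_mul, Matrix.transpose_transpose, Matrix.mul_assoc]
      _ = U * ((pdiag dL d0 svda * (pdiag dL d0 svda)ᵀ) * Uᵀ) := by
          rw [hVV, Matrix.mul_assoc]
      _ = _ := by rw [pdiag_mul_transpose, ← Matrix.mul_assoc]
  have hAinv : (Y * Xᵀ * P⁻¹ * Pi) * (Y * Xᵀ * P⁻¹ * Pi)ᵀ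
      = U' * Matrix.diagonal (fun i : Fin dL => if (i : ℕ) < d0 then svinv i ^ 2 else 0)
        * U'ᵀ := by
    rw [hSVDinv]
    have hVV : ∀ M : Matrix (Fin d0) (Fin dL) ℝ, V'ᵀ * (V' * M) = M := fun M => by
      rw [← Matrix.mul_assoc, hV', Matrix.one_mul]
    calc (U' * pdiag dL d0 svinv * V'ᵀ) * (U' * pdiag dL d0 svinv * V'ᵀ)ᵀ
        = U' * (pdiag dL d0 svinv * (V'ᵀ * (V' * ((pdiag dL d0 svinv)ᵀ * U'ᵀ)))) := by
          simp only [Matrix.transpose_mul, Matrix.transpose_transpose, Matrix.mul_assoc]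
      _ = U' * ((pdiag dL d0 svinv * (pdiag dL d0 svinv)ᵀ) * U'ᵀ) := by
          rw [hVV, Matrix.mul_assoc]
      _ = _ := by rw [pdiag_mul_transpose, ← Matrix.mul_assoc]
  -- the two eigendecompositions agree
  have hsm : Matrix.diagonal (fun i : Fin dL => c * (if (i : ℕ) < d0 then svinv i ^ 2 else 0))
      = c • Matrix.diagonal (fun i : Fin dL => if (i : ℕ) < d0 then svinv i ^ 2 else 0) := by
    rw [← Matrix.diagonal_smul]
    congr 1
  have hspec :
      U * Matrix.diagonal (fun i : Fin dL => if (i : ℕ) < d0 then svda i ^ 2 else 0) * Uᵀ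
      = U' * Matrix.diagonal
          (fun i : Fin dL => c * (if (i : ℕ) < d0 then svinv i ^ 2 else 0)) * U'ᵀ := by
    calc U * Matrix.diagonal (fun i : Fin dL => if (i : ℕ) < d0 then svda i ^ 2 else 0) * Uᵀ
        = (Y * Xᵀ * S * Q⁻¹) * (Y * Xᵀ * S * Q⁻¹)ᵀ := hAda.symm
      _ = c • (Y * (Xᵀ * (S * ((Q * Q)⁻¹ * (X * Yᵀ))))) := hZZda
      _ = c • ((Y * Xᵀ * P⁻¹ * Pi) * (Y * Xᵀ * P⁻¹ * Pi)ᵀ) := by rw [hZZinv]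
      _ = c • (U' * Matrix.diagonal
            (fun i : Fin dL => if (i : ℕ) < d0 then svinv i ^ 2 else 0) * U'ᵀ) := by
          rw [hAinv]
      _ = U' * Matrix.diagonal
            (fun i : Fin dL => c * (if (i : ℕ) < d0 then svinv i ^ 2 else 0)) * U'ᵀ := by
          rw [hsm, Matrix.mul_smul, Matrix.smul_mul]
  -- monotonicity and gap facts
  have hcnn : (0 : ℝ) ≤ c := by rw [hcdef]; positivity
  have haanti : ∀ i j : Fin dL, i ≤ j →
      (if (j : ℕ) < d0 then svda j ^ 2 else 0) ≤ (if (i : ℕ) < d0 then svda i ^ 2 else 0) := by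
    intro i j hij
    by_cases hjd : (j : ℕ) < d0
    · have hid : (i : ℕ) < d0 := lt_of_le_of_lt hij hjd
      rw [if_pos hjd, if_pos hid]
      exact pow_le_pow_left₀ (hsvda_nonneg _) (hsvda_mono _ _ hij) 2
    · rw [if_neg hjd]
      by_cases hid : (i : ℕ) < d0
      · rw [if_pos hid]; exact sq_nonneg _
      · rw [if_neg hid]
  have hbanti : ∀ i j : Fin dL, i ≤ j →
      c * (if (j : ℕ) < d0 then svinv j ^ 2 else 0)
        ≤ c * (if (i : ℕ) < d0 then svinv i ^ 2 else 0) := by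
    intro i j hij
    refine mul_le_mul_of_nonneg_left ?_ hcnn
    by_cases hjd : (j : ℕ) < d0
    · have hid : (i : ℕ) < d0 := lt_of_le_of_lt hij hjd
      rw [if_pos hjd, if_pos hid]
      exact pow_le_pow_left₀ (hsvinv_nonneg _) (hsvinv_mono _ _ hij) 2
    · rw [if_neg hjd]
      by_cases hid : (i : ℕ) < d0
      · rw [if_pos hid]; exact sq_nonneg _
      · rw [if_neg hid]
  have hagap : ∀ i j : Fin dL, (i : ℕ) < r → r ≤ (j : ℕ) →
      (if (j : ℕ) < d0 then svda j ^ 2 else 0) < (if (i : ℕ) < d0 then svda i ^ 2 else 0) := by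
    intro i j hir hrj
    have hid : (i : ℕ) < d0 := lt_trans hir hr_lt_d0
    rw [if_pos hid]
    by_cases hjd : (j : ℕ) < d0
    · rw [if_pos hjd]
      exact pow_lt_pow_left₀ (hgap_da _ _ hir hrj) (hsvda_nonneg _) two_ne_zero
    · rw [if_neg hjd]
      exact pow_pos (hda_pos _ hir) 2
  have hproj := proj_match r hU hU' hspec haanti hbanti hagap
  -- final assembly
  rw [← trunc_eq_proj_mul dL d0 svda r, ← trunc_eq_proj_mul dL d0 svinv r]
  have hUU : ∀ M : Matrix (Fin dL) (Fin d0) ℝ, Uᵀ * (U * M) = M := fun M => by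
    rw [← Matrix.mul_assoc, hU, Matrix.one_mul]
  have hU'U' : ∀ M : Matrix (Fin dL) (Fin d0) ℝ, U'ᵀ * (U' * M) = M := fun M => by
    rw [← Matrix.mul_assoc, hU', Matrix.one_mul]
  have hL : U * (Matrix.diagonal (fun i : Fin dL => if (i : ℕ) < r then (1 : ℝ) else 0)
        * pdiag dL d0 svda) * Vᵀ * Q⁻¹
      = (U * Matrix.diagonal (fun i : Fin dL => if (i : ℕ) < r then (1 : ℝ) else 0) * Uᵀ)
        * ((Y * Xᵀ * S * Q⁻¹) * Q⁻¹) := by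
    rw [hSVDda']
    simp only [Matrix.mul_assoc]
    rw [hUU]
  have hR2 : U' * (Matrix.diagonal (fun i : Fin dL => if (i : ℕ) < r then (1 : ℝ) else 0)
        * pdiag dL d0 svinv) * V'ᵀ * P⁻¹
      = (U' * Matrix.diagonal (fun i : Fin dL => if (i : ℕ) < r then (1 : ℝ) else 0) * U'ᵀ)
        * ((Y * Xᵀ * P⁻¹ * Pi) * P⁻¹) := by
    rw [hSVDinv]
    simp only [Matrix.mul_assoc]
    rw [hU'U']
  rw [hL, hR2, hproj, hZQP]
end
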